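/- arXiv:1508.05690 — 3 statements merged into one kernel-verified Lean document; each statement's English description precedes it below -/
import Mathlib

section
/- Let G_1 be a finite simple connected graph which is the union of a path v_1 v_2 … v_l (l ≥ 2), a connected subgraph H_1 with at least 2 vertices meeting the path exactly in the vertex v_1, and a connected subgraph H_2 with at least 2 vertices meeting the path exactly in the vertex v_l, where H_1 and H_2 are disjoint, V(G_1) = V(H_1) ∪ {v_1, …, v_l} ∪ V(H_2), every edge of G_1 lies in H_1, in H_2, or on the path, and the internal vertices v_2, …, v_{l−1} have degree 2 in G_1. Let G_2 be the graph obtained from G_1 by deleting every edge v_l x with x a neighbor of v_l in H_2 and adding the edge v_1 x for every such x. Then ξ^{ee}(G_1) < ξ^{ee}(G_2). -/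
open SimpleGraph

variable {V : Type*}

noncomputable def ecc (G : SimpleGraph V) (v : V) : ℕ := ⨆ u : V, G.dist v u

noncomputable def deg (G : SimpleGraph V) (v : V) : ℕ := (G.neighborSet v).ncard

noncomputable def ree {V : Type*} [Fintype V] (G : SimpleGraph V) : ℝ :=
  letI := Classical.decEq V
  letI := Classical.decRel G.Adj
  ∑ e ∈ G.edgeFinset,
    Sym2.lift ⟨fun u v => 1 / (ecc G u : ℝ) + 1 / (ecc G v : ℝ), fun _ _ => by ring⟩ e

noncomputable def gdiam (G : SimpleGraph V) : ℕ := ⨆ v : V, ecc G v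

/-!
Write `ξ^{ee}(G) = ∑ v, deg v / ecc v`. Let `a` be the largest distance from `v₁` within `H₁` and
`b` the largest distance from `v_l` within `H₂`. As `v₁` and `v_l` are cut vertices, the path
vertex `v_{i+1}` has eccentricity at least `max (i + a) (l - 1 - i + b)` in `G₁`, and at most
`max (i + max a b) (l - 1 - i)` in `G₂`, where `H₂` hangs at `v₁`. No vertex of `H₁` or of
`H₂ - v_l` gets a larger eccentricity, and only `v₁` and `v_l` change degree: `v₁` gains the
`k ≥ 1` neighbours that `v_l` loses.

If `b ≤ a`, each vertex of `G₂` is compared with itself in `G₁`; if `a < b`, the internal path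
vertices are compared with their mirror images `v_{l-i}`. Either way no term decreases except
those of `v₁` and `v_l`, and these two together gain strictly, because
`max (max a b) (l - 1) < l - 1 + max a b`.
-/

namespace SimpleGraph

variable {W : Type*} {G : SimpleGraph V} {G' : SimpleGraph W}

lemma Walk.exists_length_le_of_adj_or_eq (g : V → W)
    (hg : ∀ x y, G.Adj x y → g x = g y ∨ G'.Adj (g x) (g y)) {u v : V} (w : G.Walk u v) :
    ∃ w' : G'.Walk (g u) (g v), w'.length ≤ w.length := by
  induction w with
  | nil => exact ⟨.nil, le_rfl⟩
  | cons h _ ih =>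
    obtain ⟨w', hw'⟩ := ih
    rcases hg _ _ h with heq | hadj
    · exact ⟨w'.copy heq.symm rfl, by simp; omega⟩
    · exact ⟨.cons hadj w', by simpa using hw'⟩

lemma dist_le_dist_of_adj_or_eq (g : V → W)
    (hg : ∀ x y, G.Adj x y → g x = g y ∨ G'.Adj (g x) (g y)) {u v : V} (h : G.Reachable u v) :
    G'.dist (g u) (g v) ≤ G.dist u v := by
  obtain ⟨w, hw⟩ := h.exists_walk_length_eq_dist
  obtain ⟨w', hw'⟩ := w.exists_length_le_of_adj_or_eq g hg
  exact (dist_le w').trans (hw ▸ hw')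

lemma le_add_dist_of_adj {f : V → ℕ} (hf : ∀ x y, G.Adj x y → f x ≤ f y + 1) {u v : V}
    (huv : G.Reachable u v) : f u ≤ f v + G.dist u v := by
  obtain ⟨w, hw⟩ := huv.exists_walk_length_eq_dist
  rw [← hw]
  clear hw huv
  induction w with
  | nil => simp
  | cons h _ ih => have := hf _ _ h; simp only [Walk.length_cons]; omega

lemma Walk.mem_support_of_adj_enter {T : Set V} {c : V}
    (hc : ∀ x y, G.Adj x y → x ∉ T → y ∈ T → y = c) {a b : V} (w : G.Walk a b)
    (ha : a ∉ T) (hb : b ∈ T) : c ∈ w.support := by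
  induction w with
  | nil => exact absurd hb ha
  | @cons a x b h w ih =>
    by_cases hx : x ∈ T
    · obtain rfl := hc a x h ha hx; simp
    · simp [ih hx hb]

lemma Connected.dist_add_dist_le_of_adj_enter (hG : G.Connected) {T : Set V} {c : V}
    (hc : ∀ x y, G.Adj x y → x ∉ T → y ∈ T → y = c) {a b : V} (ha : a ∉ T) (hb : b ∈ T) :
    G.dist a c + G.dist c b ≤ G.dist a b := by
  classical
  obtain ⟨w, hw⟩ := hG.exists_walk_length_eq_dist a b
  have hcw := w.mem_support_of_adj_enter hc ha hb
  have hlen := congrArg Walk.length (w.take_spec hcw)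
  rw [Walk.length_append] at hlen
  have := dist_le (w.takeUntil c hcw)
  have := dist_le (w.dropUntil c hcw)
  omega

lemma Connected.of_adj_reachable {H : SimpleGraph V} (hG : G.Connected)
    (h : ∀ x y, G.Adj x y → H.Reachable x y) : H.Connected := by
  have := hG.nonempty
  refine ⟨fun u v => ?_⟩
  obtain ⟨w⟩ := hG u v
  induction w with
  | nil => rfl
  | cons h' _ ih => exact (h _ _ h').trans ih

lemma exists_walk_of_adj_succ {l : ℕ} {p : Fin l → V}
    (hp : ∀ i : Fin l, ∀ h : (i : ℕ) + 1 < l, G.Adj (p i) (p ⟨(i : ℕ) + 1, h⟩)) {i j : Fin l}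
    (hij : i ≤ j) : ∃ w : G.Walk (p i) (p j), w.length = j - i := by
  obtain ⟨d, hd⟩ : ∃ d, (j : ℕ) = i + d := ⟨j - i, by omega⟩
  induction d generalizing i with
  | zero => obtain rfl : i = j := Fin.ext (by omega); exact ⟨.nil, by simp⟩
  | succ d ih =>
    have hi : (i : ℕ) + 1 < l := by omega
    obtain ⟨w, hw⟩ := ih (i := ⟨i + 1, hi⟩) (Fin.mk_le_of_le_val (by omega)) (by simp; omega)
    exact ⟨.cons (hp i hi) w, by simp [hw]; omega⟩

lemma dist_le_of_adj_succ {l : ℕ} {p : Fin l → V}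
    (hp : ∀ i : Fin l, ∀ h : (i : ℕ) + 1 < l, G.Adj (p i) (p ⟨(i : ℕ) + 1, h⟩)) {i j : Fin l}
    (hij : i ≤ j) : G.dist (p i) (p j) ≤ j - i := by
  obtain ⟨w, hw⟩ := exists_walk_of_adj_succ hp hij
  exact hw ▸ dist_le w

lemma dist_retract_le {H : SimpleGraph V} {T : Set V} [DecidablePred (· ∈ T)] {c : V}
    (hT : ∀ x y, G.Adj x y → x ∈ T → y ∈ T → H.Adj x y)
    (hc : ∀ x y, G.Adj x y → x ∈ T → y ∉ T → x = c ∨ H.Adj x c) {u v : V}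
    (huv : G.Reachable u v) :
    H.dist (if u ∈ T then u else c) (if v ∈ T then v else c) ≤ G.dist u v := by
  refine dist_le_dist_of_adj_or_eq (fun z => if z ∈ T then z else c) (fun x y h => ?_) huv
  by_cases hx : x ∈ T <;> by_cases hy : y ∈ T <;> simp only [hx, hy, if_true, if_false]
  · exact .inr (hT x y h hx hy)
  · exact hc x y h hx hy
  · exact (hc y x h.symm hy hx).imp Eq.symm Adj.symm
  · simp

lemma exists_adj_of_connected_induce [Finite V] {S : Set V} (hS : (G.induce S).Connected)
    (hcard : 2 ≤ S.ncard) {v : V} (hv : v ∈ S) : ∃ z ∈ S, G.Adj v z := by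
  have : Nontrivial S := (Set.one_lt_ncard_iff_nontrivial.1 hcard).coe_sort
  obtain ⟨⟨z, hz⟩, h⟩ := hS.preconnected.exists_adj_of_nontrivial ⟨v, hv⟩
  exact ⟨z, hz, h⟩

end SimpleGraph

section Eccentricity

variable {G : SimpleGraph V}

lemma dist_le_ecc [Finite V] (G : SimpleGraph V) (v u : V) : G.dist v u ≤ ecc G v :=
  le_ciSup (Set.finite_range _).bddAbove u

lemma ecc_le [Nonempty V] {v : V} {n : ℕ} (h : ∀ u, G.dist v u ≤ n) : ecc G v ≤ n :=
  ciSup_le h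

lemma ecc_pos [Finite V] (hG : G.Connected) {u v : V} (huv : u ≠ v) : 0 < ecc G v :=
  (hG.pos_dist_of_ne huv.symm).trans_le (dist_le_ecc G v u)

noncomputable def maxDistOn (G : SimpleGraph V) (c : V) (S : Set V) : ℕ := ⨆ x : S, G.dist c x

lemma dist_le_maxDistOn [Finite V] {c x : V} {S : Set V} (hx : x ∈ S) :
    G.dist c x ≤ maxDistOn G c S :=
  le_ciSup (f := fun y : S => G.dist c y) (Set.finite_range _).bddAbove ⟨x, hx⟩

lemma exists_dist_eq_maxDistOn [Finite V] (c : V) {S : Set V} (hS : S.Nonempty) :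
    ∃ x ∈ S, G.dist c x = maxDistOn G c S := by
  have := hS.to_subtype
  obtain ⟨⟨x, hx⟩, h⟩ := exists_eq_ciSup_of_finite (f := fun x : S => G.dist c x)
  exact ⟨x, hx, h⟩

lemma one_le_maxDistOn [Finite V] (hG : G.Connected) {c : V} {S : Set V}
    (hS : 2 ≤ S.ncard) : 1 ≤ maxDistOn G c S := by
  obtain ⟨x, hx, hxc⟩ := Set.exists_ne_of_one_lt_ncard hS c
  exact (hG.pos_dist_of_ne hxc.symm).trans_le (dist_le_maxDistOn hx)

end Eccentricity

lemma ree_eq_sum_deg_div_ecc [Fintype V] (G : SimpleGraph V) :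
    ree G = ∑ v, (deg G v : ℝ) / ecc G v := by
  let := Classical.decEq V
  let := Classical.decRel G.Adj
  have hedge : ∀ e ∈ G.edgeFinset,
      Sym2.lift ⟨fun u v => 1 / (ecc G u : ℝ) + 1 / (ecc G v : ℝ), fun _ _ => by ring⟩ e =
        ∑ v ∈ Finset.univ with v ∈ e, 1 / (ecc G v : ℝ) := by
    intro e he
    induction e with
    | _ x y =>
      have hxy : x ≠ y := G.ne_of_adj (by simpa using he)
      have : ({v | v ∈ s(x, y)} : Finset V) = {x, y} := by ext; simp
      rw [Sym2.lift_mk, this, Finset.sum_pair hxy]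
  have hdeg : ∀ v, deg G v = (G.incidenceFinset v).card := fun v => by
    rw [card_incidenceFinset_eq_degree, ← card_neighborFinset_eq_degree, deg,
      Set.ncard_eq_toFinset_card', neighborFinset_def]
  unfold ree
  rw [Finset.sum_congr rfl hedge, Finset.sum_comm' (s' := fun v => G.incidenceFinset v)]
  · refine Finset.sum_congr rfl fun v _ => ?_
    rw [Finset.sum_const, nsmul_eq_mul, hdeg, mul_one_div]
  · intro e v
    simp [incidenceSet, and_comm]

namespace SimpleGraph

variable (G : SimpleGraph V) (S : Set V) (w u : V)

def transferEdges : SimpleGraph V :=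
  G.deleteEdges {e | ∃ x ∈ S, G.Adj w x ∧ e = s(w, x)} ⊔
    fromEdgeSet {e | ∃ x ∈ S, G.Adj w x ∧ e = s(u, x)}

variable {G S w u}

lemma transferEdges_adj {x y : V} :
    (G.transferEdges S w u).Adj x y ↔
      G.Adj x y ∧ ¬(x = w ∧ y ∈ S) ∧ ¬(y = w ∧ x ∈ S) ∨
        x ≠ y ∧ (x = u ∧ y ∈ S ∧ G.Adj w y ∨ y = u ∧ x ∈ S ∧ G.Adj w x) := by
  simp only [transferEdges, sup_adj, deleteEdges_adj, fromEdgeSet_adj, Set.mem_ofPred_eq,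
    Sym2.eq_iff]
  constructor
  · rintro (⟨hxy, hx⟩ | ⟨⟨z, hz, hwz, h⟩, hne⟩)
    · refine .inl ⟨hxy, ?_, ?_⟩ <;> rintro ⟨rfl, h⟩
      exacts [hx ⟨y, h, hxy, by simp⟩, hx ⟨x, h, hxy.symm, by simp⟩]
    · rcases h with ⟨rfl, rfl⟩ | ⟨rfl, rfl⟩
      exacts [.inr ⟨hne, .inl ⟨rfl, hz, hwz⟩⟩, .inr ⟨hne, .inr ⟨rfl, hz, hwz⟩⟩]
  · rintro (⟨hxy, hx, hy⟩ | ⟨hne, ⟨rfl, hy, hwy⟩ | ⟨rfl, hx, hwx⟩⟩)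
    · refine .inl ⟨hxy, ?_⟩
      rintro ⟨z, hz, -, ⟨rfl, rfl⟩ | ⟨rfl, rfl⟩⟩
      exacts [hx ⟨rfl, hz⟩, hy ⟨rfl, hz⟩]
    · exact .inr ⟨⟨y, hy, hwy, by simp⟩, hne⟩
    · exact .inr ⟨⟨x, hx, hwx, by simp⟩, hne⟩

lemma transferEdges_adj_of_adj {x y : V} (h : G.Adj x y) (hx : ¬(x = w ∧ y ∈ S))
    (hy : ¬(y = w ∧ x ∈ S)) : (G.transferEdges S w u).Adj x y :=
  transferEdges_adj.2 (.inl ⟨h, hx, hy⟩)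

lemma transferEdges_adj_of_mem (hu : u ∉ S) {x : V} (hx : x ∈ S) (h : G.Adj w x) :
    (G.transferEdges S w u).Adj u x :=
  transferEdges_adj.2 (.inr ⟨fun hux => hu (hux ▸ hx), .inl ⟨rfl, hx, h⟩⟩)

lemma Connected.transferEdges (hG : G.Connected) (hu : u ∉ S)
    (huw : (G.transferEdges S w u).Reachable u w) : (G.transferEdges S w u).Connected := by
  refine hG.of_adj_reachable fun x y h => ?_
  by_cases hx : x = w ∧ y ∈ S
  · obtain ⟨rfl, hy⟩ := hx
    exact huw.symm.trans (transferEdges_adj_of_mem hu hy h).reachable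
  by_cases hy : y = w ∧ x ∈ S
  · obtain ⟨rfl, hx'⟩ := hy
    exact (transferEdges_adj_of_mem hu hx' h.symm).reachable.symm.trans huw
  exact (transferEdges_adj_of_adj h hx hy).reachable

lemma neighborSet_transferEdges_right (huw : u ≠ w) :
    (G.transferEdges S w u).neighborSet w = G.neighborSet w \ S := by
  ext z
  rw [mem_neighborSet, transferEdges_adj, Set.mem_sdiff, mem_neighborSet]
  constructor
  · rintro (⟨h, hz, -⟩ | ⟨-, ⟨rfl, -⟩ | ⟨-, -, h⟩⟩)
    exacts [⟨h, fun hz' => hz ⟨rfl, hz'⟩⟩, absurd rfl huw, absurd h (G.loopless.irrefl w)]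
  · rintro ⟨h, hz⟩
    exact .inl ⟨h, fun h' => hz h'.2, fun h' => G.loopless.irrefl w (h'.1 ▸ h)⟩

lemma deg_transferEdges_left [Finite V] (hu : u ∉ S) (huw : u ≠ w)
    (hN : ∀ x ∈ S, G.Adj w x → ¬G.Adj u x) :
    deg (G.transferEdges S w u) u = deg G u + (G.neighborSet w ∩ S).ncard := by
  have : (G.transferEdges S w u).neighborSet u = G.neighborSet u ∪ (G.neighborSet w ∩ S) := by
    ext z
    rw [mem_neighborSet, transferEdges_adj, Set.mem_union, Set.mem_inter_iff, mem_neighborSet,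
      mem_neighborSet]
    constructor
    · rintro (⟨h, -⟩ | ⟨-, ⟨-, hz, h⟩ | ⟨-, hu', -⟩⟩)
      exacts [.inl h, .inr ⟨h, hz⟩, absurd hu' hu]
    · rintro (h | ⟨h, hz⟩)
      · exact .inl ⟨h, fun h' => huw h'.1, fun h' => hu h'.2⟩
      · exact .inr ⟨fun h' => hu (h' ▸ hz), .inl ⟨rfl, hz, h⟩⟩
  rw [deg, deg, this, Set.ncard_union_eq]
  exact Set.disjoint_left.2 fun z hz hz' => hN z hz'.2 hz'.1 hz

lemma deg_transferEdges_of_ne [Finite V] (hN : ∀ x ∈ S, G.Adj w x → ¬G.Adj u x) {v : V}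
    (hvu : v ≠ u) (hvw : v ≠ w) : deg (G.transferEdges S w u) v = deg G v := by
  have hadj : ∀ z, (G.transferEdges S w u).Adj v z ↔
      G.Adj v z ∧ ¬(z = w ∧ v ∈ S) ∨ z = u ∧ v ∈ S ∧ G.Adj w v := fun z => by
    rw [transferEdges_adj]
    constructor
    · rintro (⟨h, -, h'⟩ | ⟨-, ⟨rfl, -⟩ | h⟩)
      exacts [.inl ⟨h, h'⟩, absurd rfl hvu, .inr h]
    · rintro (⟨h, h'⟩ | ⟨rfl, h⟩)
      exacts [.inl ⟨h, fun h'' => hvw h''.1, h'⟩, .inr ⟨hvu, .inr ⟨rfl, h⟩⟩]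
  rw [deg, deg]
  by_cases hv : v ∈ S ∧ G.Adj w v
  · have hnbr : (G.transferEdges S w u).neighborSet v = insert u (G.neighborSet v \ {w}) := by
      ext z
      simp only [mem_neighborSet, hadj, hv, and_true, Set.mem_insert_iff, Set.mem_sdiff,
        Set.mem_singleton_iff]
      tauto
    have hu : u ∉ G.neighborSet v \ {w} := fun h => hN v hv.1 hv.2 h.1.symm
    rw [hnbr, Set.ncard_insert_of_notMem hu]
    exact Set.ncard_sdiff_singleton_add_one (s := G.neighborSet v) hv.2.symm
  · congr 1
    ext z
    simp only [mem_neighborSet, hadj]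
    constructor
    · rintro (⟨h, -⟩ | ⟨-, h⟩)
      exacts [h, absurd h hv]
    · exact fun h => .inl ⟨h, fun h' => hv ⟨h'.2, h'.1 ▸ h.symm⟩⟩

end SimpleGraph

lemma Finset.sum_lt_sum_of_perm {ι M : Type*} [Fintype ι] [DecidableEq ι] [AddCommMonoid M]
    [PartialOrder M] [IsOrderedCancelAddMonoid M] {f g : ι → M} (σ : Equiv.Perm ι) {a b : ι}
    (hab : a ≠ b) (hσ : σ a = a ∧ σ b = b ∨ σ a = b ∧ σ b = a)
    (hle : ∀ i, i ≠ a → i ≠ b → g (σ i) ≤ f i) (hlt : g a + g b < f a + f b) :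
    ∑ i, g i < ∑ i, f i := by
  have hb : b ∈ Finset.univ.erase a := Finset.mem_erase.2 ⟨hab.symm, Finset.mem_univ b⟩
  rw [← Equiv.sum_comp σ g, ← Finset.add_sum_erase _ _ (Finset.mem_univ a),
    ← Finset.add_sum_erase _ _ hb, ← Finset.add_sum_erase _ _ (Finset.mem_univ a),
    ← Finset.add_sum_erase _ _ hb, ← add_assoc, ← add_assoc]
  refine add_lt_add_of_lt_of_le ?_ (Finset.sum_le_sum fun i hi => ?_)
  · rcases hσ with ⟨ha, hb⟩ | ⟨ha, hb⟩ <;> rw [ha, hb]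
    · exact hlt
    · rwa [add_comm]
  · simp only [Finset.mem_erase] at hi
    exact hle i hi.2.1 hi.1

section PathReverse

variable {l : ℕ} {p : Fin l → V}

noncomputable def pathReverse (hp : Function.Injective p) : Equiv.Perm V := by
  classical exact Fin.revPerm.extendDomain (Equiv.ofInjective p hp)

lemma pathReverse_apply (hp : Function.Injective p) (i : Fin l) :
    pathReverse hp (p i) = p i.rev := by
  classical
  have := Fin.revPerm.extendDomain_apply_image (Equiv.ofInjective p hp) i
  simpa [pathReverse] using this

lemma pathReverse_apply_of_notMem (hp : Function.Injective p) {v : V} (hv : v ∉ Set.range p) :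
    pathReverse hp v = v := by
  classical
  exact Fin.revPerm.extendDomain_apply_not_subtype (Equiv.ofInjective p hp) hv

end PathReverse

lemma div_add_div_lt_div_add_div {α β γ δ M L : ℝ} (hM : 0 < M) (hML : M < L)
    (hsum : α + β = γ + δ) (hαγ : α < γ) : α / M + β / L < γ / M + δ / L := by
  have hL : 0 < L := hM.trans hML
  rw [div_add_div _ _ hM.ne' hL.ne', div_add_div _ _ hM.ne' hL.ne',
    div_lt_div_iff_of_pos_right (by positivity)]
  nlinarith

/-- The graph `G₁` of the paper: a path `p 0, …, p (l-1)` joining a graph `H₁ = G[S₁]` hanging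
at `p 0` to a graph `H₂ = G[S₂]` hanging at `p (l-1)`. -/
structure PathBridge (G : SimpleGraph V) {l : ℕ} (p : Fin l → V) (S₁ S₂ : Set V) : Prop where
  two_le : 2 ≤ l
  connected : G.Connected
  injective : Function.Injective p
  adj_succ : ∀ i : Fin l, ∀ h : (i : ℕ) + 1 < l, G.Adj (p i) (p ⟨(i : ℕ) + 1, h⟩)
  connected_left : (G.induce S₁).Connected
  connected_right : (G.induce S₂).Connected
  two_le_ncard_left : 2 ≤ S₁.ncard
  two_le_ncard_right : 2 ≤ S₂.ncard
  inter_eq_empty : S₁ ∩ S₂ = ∅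
  inter_range_left : S₁ ∩ Set.range p = {p ⟨0, by omega⟩}
  inter_range_right : S₂ ∩ Set.range p = {p ⟨l - 1, by omega⟩}
  univ_eq : (Set.univ : Set V) = S₁ ∪ Set.range p ∪ S₂
  adj_cases : ∀ x y, G.Adj x y → (x ∈ S₁ ∧ y ∈ S₁) ∨ (x ∈ S₂ ∧ y ∈ S₂) ∨
    ∃ i : Fin l, ∃ h : (i : ℕ) + 1 < l, s(x, y) = s(p i, p ⟨(i : ℕ) + 1, h⟩)
  deg_eq_two : ∀ i : Fin l, 0 < (i : ℕ) → (i : ℕ) < l - 1 → deg G (p i) = 2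

namespace PathBridge

variable {G : SimpleGraph V} {l : ℕ} {p : Fin l → V} {S₁ S₂ : Set V}

lemma pos (hB : PathBridge G p S₁ S₂) : 0 < l := by have := hB.two_le; omega

lemma sub_one_lt (hB : PathBridge G p S₁ S₂) : l - 1 < l := by have := hB.two_le; omega

def first (hB : PathBridge G p S₁ S₂) : V := p ⟨0, hB.pos⟩

def last (hB : PathBridge G p S₁ S₂) : V := p ⟨l - 1, hB.sub_one_lt⟩

lemma mem_left_iff (hB : PathBridge G p S₁ S₂) (i : Fin l) : p i ∈ S₁ ↔ (i : ℕ) = 0 := by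
  have h := Set.ext_iff.1 hB.inter_range_left (p i)
  simp only [Set.mem_inter_iff, Set.mem_range_self, and_true, Set.mem_singleton_iff,
    hB.injective.eq_iff] at h
  rw [h, Fin.ext_iff]

lemma mem_right_iff (hB : PathBridge G p S₁ S₂) (i : Fin l) : p i ∈ S₂ ↔ (i : ℕ) = l - 1 := by
  have h := Set.ext_iff.1 hB.inter_range_right (p i)
  simp only [Set.mem_inter_iff, Set.mem_range_self, and_true, Set.mem_singleton_iff,
    hB.injective.eq_iff] at h
  rw [h, Fin.ext_iff]

lemma first_mem_left (hB : PathBridge G p S₁ S₂) : hB.first ∈ S₁ := (hB.mem_left_iff _).2 rfl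

lemma last_mem_right (hB : PathBridge G p S₁ S₂) : hB.last ∈ S₂ := (hB.mem_right_iff _).2 rfl

lemma notMem_right_of_mem_left (hB : PathBridge G p S₁ S₂) {x : V} (hx : x ∈ S₁) : x ∉ S₂ :=
  fun hx' => (Set.ext_iff.1 hB.inter_eq_empty x).1 ⟨hx, hx'⟩

lemma notMem_left_of_mem_right (hB : PathBridge G p S₁ S₂) {x : V} (hx : x ∈ S₂) : x ∉ S₁ :=
  fun hx' => hB.notMem_right_of_mem_left hx' hx

lemma first_ne_last (hB : PathBridge G p S₁ S₂) : hB.first ≠ hB.last := fun h =>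
  hB.notMem_right_of_mem_left hB.first_mem_left (h ▸ hB.last_mem_right)

lemma path_ne_first (hB : PathBridge G p S₁ S₂) {i : Fin l} (hi : 0 < (i : ℕ)) :
    p i ≠ hB.first := fun h => by
  have := Fin.ext_iff.1 (hB.injective h)
  simp only at this
  omega

lemma path_ne_last (hB : PathBridge G p S₁ S₂) {i : Fin l} (hi : (i : ℕ) < l - 1) :
    p i ≠ hB.last := fun h => by
  have := Fin.ext_iff.1 (hB.injective h)
  simp only at this
  omega

lemma left_or_path_or_right (hB : PathBridge G p S₁ S₂) (z : V) :
    z ∈ S₁ ∨ (∃ j, p j = z) ∨ (z ∈ S₂ ∧ z ≠ hB.last) := by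
  have hz : z ∈ S₁ ∪ Set.range p ∪ S₂ := hB.univ_eq ▸ Set.mem_univ z
  rcases hz with (hz | hz) | hz
  · exact .inl hz
  · exact .inr (.inl hz)
  · by_cases h : z = hB.last
    · exact .inr (.inl ⟨_, h.symm⟩)
    · exact .inr (.inr ⟨hz, h⟩)

lemma eq_first_of_adj (hB : PathBridge G p S₁ S₂) {x y : V} (h : G.Adj x y) (hx : x ∈ S₁)
    (hy : y ∉ S₁) : x = hB.first := by
  rcases hB.adj_cases x y h with ⟨-, hy'⟩ | ⟨hx', -⟩ | ⟨i, hi, he⟩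
  · exact absurd hy' hy
  · exact absurd hx' (hB.notMem_right_of_mem_left hx)
  · rcases Sym2.eq_iff.1 he with ⟨rfl, rfl⟩ | ⟨rfl, rfl⟩
    · exact congrArg p (Fin.ext ((hB.mem_left_iff i).1 hx))
    · exact absurd ((hB.mem_left_iff _).1 hx) (by simp)

lemma eq_last_of_adj (hB : PathBridge G p S₁ S₂) {x y : V} (h : G.Adj x y) (hx : x ∈ S₂)
    (hy : y ∉ S₂) : x = hB.last := by
  rcases hB.adj_cases x y h with ⟨hx', -⟩ | ⟨-, hy'⟩ | ⟨i, hi, he⟩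
  · exact absurd hx (hB.notMem_right_of_mem_left hx')
  · exact absurd hy' hy
  · rcases Sym2.eq_iff.1 he with ⟨rfl, rfl⟩ | ⟨rfl, rfl⟩
    · exact absurd ((hB.mem_right_iff i).1 hx) (by omega)
    · exact congrArg p (Fin.ext ((hB.mem_right_iff _).1 hx))

lemma neighborSet_last_sdiff (hB : PathBridge G p S₁ S₂) :
    G.neighborSet hB.last \ S₂ = {p ⟨l - 2, by have := hB.two_le; omega⟩} := by
  have hl := hB.two_le
  ext z
  rw [Set.mem_sdiff, mem_neighborSet, Set.mem_singleton_iff]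
  constructor
  · rintro ⟨h, hz⟩
    rcases hB.adj_cases _ _ h with ⟨h', -⟩ | ⟨-, h'⟩ | ⟨i, hi, he⟩
    · exact absurd hB.last_mem_right (hB.notMem_right_of_mem_left h')
    · exact absurd h' hz
    · rcases Sym2.eq_iff.1 he with ⟨h', rfl⟩ | ⟨h', rfl⟩
      · have hi' : l - 1 = i := Fin.ext_iff.1 (hB.injective h')
        omega
      · have hi' : l - 1 = i + 1 := Fin.ext_iff.1 (hB.injective h')
        exact congrArg p (Fin.ext (by simp; omega))
  · rintro rfl
    refine ⟨?_, fun h => by have := (hB.mem_right_iff _).1 h; simp at this; omega⟩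
    have h := hB.adj_succ ⟨l - 2, by omega⟩ (by simp only; omega)
    have e : p ⟨l - 2 + 1, by omega⟩ = hB.last := congrArg p (Fin.ext (by simp only; omega))
    exact e ▸ h.symm

lemma exists_potential (hB : PathBridge G p S₁ S₂) :
    ∃ f : V → ℕ, (∀ i, f (p i) = i) ∧ ∀ x y, G.Adj x y → f x ≤ f y + 1 := by
  classical
  let f : V → ℕ := fun z => if h : ∃ i, p i = z then h.choose else if z ∈ S₁ then 0 else l - 1
  have hf : ∀ i, f (p i) = i := fun i => by
    have h : ∃ j, p j = p i := ⟨i, rfl⟩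
    simp only [f, dif_pos h]
    exact congrArg Fin.val (hB.injective h.choose_spec)
  have hf₁ : ∀ z ∈ S₁, f z = 0 := fun z hz => by
    by_cases h : ∃ i, p i = z
    · obtain ⟨i, rfl⟩ := h
      exact (hf i).trans ((hB.mem_left_iff i).1 hz)
    · simp [f, h, hz]
  have hf₂ : ∀ z ∈ S₂, f z = l - 1 := fun z hz => by
    by_cases h : ∃ i, p i = z
    · obtain ⟨i, rfl⟩ := h
      exact (hf i).trans ((hB.mem_right_iff i).1 hz)
    · simp [f, h, hB.notMem_left_of_mem_right hz]
  refine ⟨f, hf, fun x y h => ?_⟩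
  rcases hB.adj_cases x y h with ⟨hx, hy⟩ | ⟨hx, hy⟩ | ⟨i, hi, he⟩
  · simp [hf₁ x hx, hf₁ y hy]
  · simp [hf₂ x hx, hf₂ y hy]
  · rcases Sym2.eq_iff.1 he with ⟨rfl, rfl⟩ | ⟨rfl, rfl⟩ <;> simp only [hf] <;> omega

lemma dist_path (hB : PathBridge G p S₁ S₂) {i j : Fin l} (hij : i ≤ j) :
    G.dist (p i) (p j) = j - i := by
  obtain ⟨f, hfp, hf⟩ := hB.exists_potential
  have h₁ := le_add_dist_of_adj hf (hB.connected (p j) (p i))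
  have h₂ := dist_le_of_adj_succ hB.adj_succ hij
  rw [hfp, hfp, dist_comm] at h₁
  omega

lemma dist_first_path (hB : PathBridge G p S₁ S₂) (i : Fin l) : G.dist hB.first (p i) = i :=
  hB.dist_path (Nat.zero_le _)

lemma dist_path_last (hB : PathBridge G p S₁ S₂) (i : Fin l) :
    G.dist (p i) hB.last = l - 1 - i :=
  hB.dist_path (Nat.le_sub_one_of_lt i.isLt)

lemma adj_enter_left (hB : PathBridge G p S₁ S₂) :
    ∀ x y, G.Adj x y → x ∉ S₁ → y ∈ S₁ → y = hB.first :=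
  fun _ _ h hx hy => hB.eq_first_of_adj h.symm hy hx

lemma adj_enter_right (hB : PathBridge G p S₁ S₂) :
    ∀ x y, G.Adj x y → x ∉ S₂ → y ∈ S₂ → y = hB.last :=
  fun _ _ h hx hy => hB.eq_last_of_adj h.symm hy hx

lemma add_maxDistOn_left_le_ecc [Finite V] (hB : PathBridge G p S₁ S₂) (i : Fin l) :
    i + maxDistOn G hB.first S₁ ≤ ecc G (p i) := by
  obtain ⟨w, hw, hwa⟩ := exists_dist_eq_maxDistOn (G := G) hB.first ⟨_, hB.first_mem_left⟩
  refine le_trans ?_ (dist_le_ecc G (p i) w)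
  by_cases hi : p i ∈ S₁
  · have hi0 := (hB.mem_left_iff i).1 hi
    have : p i = hB.first := congrArg p (Fin.ext hi0)
    rw [this, hwa, hi0, zero_add]
  · have := hB.connected.dist_add_dist_le_of_adj_enter hB.adj_enter_left hi hw
    rw [dist_comm, hB.dist_first_path, hwa] at this
    exact this

lemma add_maxDistOn_right_le_ecc [Finite V] (hB : PathBridge G p S₁ S₂) (i : Fin l) :
    (l - 1 - i) + maxDistOn G hB.last S₂ ≤ ecc G (p i) := by
  obtain ⟨x, hx, hxb⟩ := exists_dist_eq_maxDistOn (G := G) hB.last ⟨_, hB.last_mem_right⟩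
  refine le_trans ?_ (dist_le_ecc G (p i) x)
  by_cases hi : p i ∈ S₂
  · have hil := (hB.mem_right_iff i).1 hi
    have : p i = hB.last := congrArg p (Fin.ext hil)
    rw [this, hxb, hil, Nat.sub_self, zero_add]
  · have := hB.connected.dist_add_dist_le_of_adj_enter hB.adj_enter_right hi hx
    rwa [hB.dist_path_last, hxb] at this

lemma dist_first_add_le_ecc [Finite V] (hB : PathBridge G p S₁ S₂) {u : V} (hu : u ∈ S₁) :
    G.dist u hB.first + (l - 1) + maxDistOn G hB.last S₂ ≤ ecc G u := by
  obtain ⟨x, hx, hxb⟩ := exists_dist_eq_maxDistOn (G := G) hB.last ⟨_, hB.last_mem_right⟩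
  have h₁ := hB.connected.dist_add_dist_le_of_adj_enter hB.adj_enter_left
    (hB.notMem_left_of_mem_right hx) hu
  have h₂ := hB.connected.dist_add_dist_le_of_adj_enter hB.adj_enter_right
    (hB.notMem_right_of_mem_left hB.first_mem_left) hx
  have h₃ := dist_le_ecc G u x
  have h₄ : G.dist hB.first hB.last = l - 1 := hB.dist_first_path _
  have := dist_comm (G := G) (u := x) (v := hB.first)
  have := dist_comm (G := G) (u := u) (v := hB.first)
  have := dist_comm (G := G) (u := u) (v := x)
  omega

lemma dist_last_add_le_ecc [Finite V] (hB : PathBridge G p S₁ S₂) {x : V} (hx : x ∈ S₂) :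
    G.dist x hB.last + (l - 1) + maxDistOn G hB.first S₁ ≤ ecc G x := by
  obtain ⟨w, hw, hwa⟩ := exists_dist_eq_maxDistOn (G := G) hB.first ⟨_, hB.first_mem_left⟩
  have h₁ := hB.connected.dist_add_dist_le_of_adj_enter hB.adj_enter_right
    (hB.notMem_right_of_mem_left hw) hx
  have h₂ := hB.connected.dist_add_dist_le_of_adj_enter hB.adj_enter_left
    (hB.notMem_left_of_mem_right hB.last_mem_right) hw
  have h₃ := dist_le_ecc G x w
  have h₄ : G.dist hB.first hB.last = l - 1 := hB.dist_first_path _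
  have := dist_comm (G := G) (u := w) (v := hB.last)
  have := dist_comm (G := G) (u := hB.first) (v := hB.last)
  have := dist_comm (G := G) (u := x) (v := hB.last)
  have := dist_comm (G := G) (u := x) (v := w)
  omega

/-- The graph `G₂` of the paper. -/
def transformed (hB : PathBridge G p S₁ S₂) : SimpleGraph V :=
  G.transferEdges S₂ hB.last hB.first

lemma first_notMem_right (hB : PathBridge G p S₁ S₂) : hB.first ∉ S₂ :=
  hB.notMem_right_of_mem_left hB.first_mem_left

lemma not_adj_first (hB : PathBridge G p S₁ S₂) :
    ∀ x ∈ S₂, G.Adj hB.last x → ¬G.Adj hB.first x := fun x hx hlx h => by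
  obtain rfl := hB.eq_last_of_adj h.symm hx hB.first_notMem_right
  exact G.loopless.irrefl _ hlx

lemma transformed_adj_succ (hB : PathBridge G p S₁ S₂) (i : Fin l) (hi : (i : ℕ) + 1 < l) :
    hB.transformed.Adj (p i) (p ⟨(i : ℕ) + 1, hi⟩) := by
  refine transferEdges_adj_of_adj (hB.adj_succ i hi) (fun h => ?_) (fun h => ?_)
  · have := (hB.mem_right_iff i).1 (h.1 ▸ hB.last_mem_right); omega
  · have := (hB.mem_right_iff i).1 h.2; omega

lemma transformed_connected (hB : PathBridge G p S₁ S₂) : hB.transformed.Connected := by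
  refine hB.connected.transferEdges hB.first_notMem_right ?_
  obtain ⟨w, -⟩ := exists_walk_of_adj_succ hB.transformed_adj_succ
    (i := ⟨0, hB.pos⟩) (j := ⟨l - 1, hB.sub_one_lt⟩) (Nat.zero_le _)
  exact ⟨w⟩

lemma dist_transformed_le_of_mem_left (hB : PathBridge G p S₁ S₂) {u w : V} (hu : u ∈ S₁)
    (hw : w ∈ S₁) : hB.transformed.dist u w ≤ G.dist u w := by
  classical
  have := dist_retract_le (H := hB.transformed) (c := hB.first)
    (fun x y h hx hy => transferEdges_adj_of_adj h
      (fun h' => hB.notMem_right_of_mem_left hy h'.2)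
      (fun h' => hB.notMem_right_of_mem_left hx h'.2))
    (fun x y h hx hy => .inl (hB.eq_first_of_adj h hx hy)) (hB.connected u w)
  simpa [hu, hw] using this

open Classical in
lemma dist_transformed_retract_right (hB : PathBridge G p S₁ S₂) (u v : V) :
    hB.transformed.dist (if u ∈ S₂ \ {hB.last} then u else hB.first)
      (if v ∈ S₂ \ {hB.last} then v else hB.first) ≤ G.dist u v := by
  refine dist_retract_le (T := S₂ \ {hB.last})
    (fun x y h (hx : x ∈ S₂ \ {hB.last}) (hy : y ∈ S₂ \ {hB.last}) =>
      transferEdges_adj_of_adj h (fun h' => hx.2 h'.1) (fun h' => hy.2 h'.1))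
    (fun x y h (hx : x ∈ S₂ \ {hB.last}) hy => .inr ?_) (hB.connected u v)
  by_cases hy' : y ∈ S₂
  · obtain rfl : y = hB.last := not_not.1 fun h' => hy ⟨hy', h'⟩
    exact (transferEdges_adj_of_mem hB.first_notMem_right hx.1 h.symm).symm
  · exact absurd (hB.eq_last_of_adj h hx.1 hy') hx.2

lemma dist_transformed_le_of_mem_right (hB : PathBridge G p S₁ S₂) {x y : V} (hx : x ∈ S₂)
    (hx' : x ≠ hB.last) (hy : y ∈ S₂) (hy' : y ≠ hB.last) :
    hB.transformed.dist x y ≤ G.dist x y := by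
  simpa [hx, hx', hy, hy'] using hB.dist_transformed_retract_right x y

lemma dist_transformed_first_le (hB : PathBridge G p S₁ S₂) {x : V} (hx : x ∈ S₂)
    (hx' : x ≠ hB.last) : hB.transformed.dist hB.first x ≤ G.dist hB.last x := by
  simpa [hx, hx'] using hB.dist_transformed_retract_right hB.last x

lemma dist_transformed_first_path_le (hB : PathBridge G p S₁ S₂) (j : Fin l) :
    hB.transformed.dist hB.first (p j) ≤ j :=
  dist_le_of_adj_succ hB.transformed_adj_succ (i := ⟨0, hB.pos⟩) (Nat.zero_le _)

lemma dist_transformed_first_le_of_mem_left [Finite V] (hB : PathBridge G p S₁ S₂) {z : V}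
    (hz : z ∈ S₁) :
    hB.transformed.dist hB.first z ≤ maxDistOn G hB.first S₁ :=
  (hB.dist_transformed_le_of_mem_left hB.first_mem_left hz).trans (dist_le_maxDistOn hz)

lemma dist_transformed_first_le_of_mem_right [Finite V] (hB : PathBridge G p S₁ S₂) {z : V}
    (hz : z ∈ S₂) (hz' : z ≠ hB.last) : hB.transformed.dist hB.first z ≤ maxDistOn G hB.last S₂ :=
  (hB.dist_transformed_first_le hz hz').trans (dist_le_maxDistOn hz)

lemma ecc_transformed_path_le [Finite V] (hB : PathBridge G p S₁ S₂) (i : Fin l) :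
    ecc hB.transformed (p i) ≤
      max (i + max (maxDistOn G hB.first S₁) (maxDistOn G hB.last S₂)) (l - 1 - i) := by
  have := Nonempty.intro hB.first
  refine ecc_le fun z => ?_
  have hi : hB.transformed.dist (p i) hB.first ≤ i :=
    dist_comm.trans_le (hB.dist_transformed_first_path_le i)
  have htri := hB.transformed_connected.dist_triangle (u := p i) (v := hB.first) (w := z)
  rcases hB.left_or_path_or_right z with hz | ⟨j, rfl⟩ | ⟨hz, hz'⟩
  · have := hB.dist_transformed_first_le_of_mem_left hz
    omega
  · rcases le_total i j with hij | hij
    · have := dist_le_of_adj_succ hB.transformed_adj_succ hij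
      omega
    · have := dist_le_of_adj_succ hB.transformed_adj_succ hij
      rw [dist_comm] at this
      omega
  · have := hB.dist_transformed_first_le_of_mem_right hz hz'
    omega

lemma ecc_transformed_le_of_mem_left [Finite V] (hB : PathBridge G p S₁ S₂) {u : V}
    (hu : u ∈ S₁) : ecc hB.transformed u ≤ ecc G u := by
  have := Nonempty.intro u
  refine ecc_le fun z => ?_
  have hecc := hB.dist_first_add_le_ecc hu
  have hu₀ := hB.dist_transformed_le_of_mem_left hu hB.first_mem_left
  have htri := hB.transformed_connected.dist_triangle (u := u) (v := hB.first) (w := z)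
  rcases hB.left_or_path_or_right z with hz | ⟨j, rfl⟩ | ⟨hz, hz'⟩
  · exact (hB.dist_transformed_le_of_mem_left hu hz).trans (dist_le_ecc G u z)
  · have := hB.dist_transformed_first_path_le j
    omega
  · have := hB.dist_transformed_first_le_of_mem_right hz hz'
    omega

lemma ecc_transformed_le_of_mem_right [Finite V] (hB : PathBridge G p S₁ S₂) {x : V}
    (hx : x ∈ S₂) (hx' : x ≠ hB.last) : ecc hB.transformed x ≤ ecc G x := by
  have := Nonempty.intro x
  refine ecc_le fun z => ?_
  have hecc := hB.dist_last_add_le_ecc hx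
  have hx₀ : hB.transformed.dist x hB.first ≤ G.dist x hB.last := by
    rw [dist_comm, dist_comm (u := x)]
    exact hB.dist_transformed_first_le hx hx'
  have htri := hB.transformed_connected.dist_triangle (u := x) (v := hB.first) (w := z)
  rcases hB.left_or_path_or_right z with hz | ⟨j, rfl⟩ | ⟨hz, hz'⟩
  · have := hB.dist_transformed_first_le_of_mem_left hz
    omega
  · have := hB.dist_transformed_first_path_le j
    omega
  · exact (hB.dist_transformed_le_of_mem_right hx hx' hz hz').trans (dist_le_ecc G x z)

lemma ecc_transformed_pos [Finite V] (hB : PathBridge G p S₁ S₂) (v : V) :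
    0 < ecc hB.transformed v := by
  by_cases hv : v = hB.first
  · exact ecc_pos hB.transformed_connected (hv ▸ hB.first_ne_last).symm
  · exact ecc_pos hB.transformed_connected (Ne.symm hv)

lemma deg_transformed_first [Finite V] (hB : PathBridge G p S₁ S₂) :
    deg hB.transformed hB.first = deg G hB.first + (G.neighborSet hB.last ∩ S₂).ncard :=
  deg_transferEdges_left hB.first_notMem_right hB.first_ne_last hB.not_adj_first

lemma deg_transformed_last (hB : PathBridge G p S₁ S₂) : deg hB.transformed hB.last = 1 := by
  rw [deg, transformed, neighborSet_transferEdges_right hB.first_ne_last,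
    hB.neighborSet_last_sdiff, Set.ncard_singleton]

lemma deg_last [Finite V] (hB : PathBridge G p S₁ S₂) :
    deg G hB.last = 1 + (G.neighborSet hB.last ∩ S₂).ncard := by
  rw [deg, ← Set.ncard_inter_add_ncard_sdiff_eq_ncard _ S₂, hB.neighborSet_last_sdiff,
    Set.ncard_singleton, add_comm]

lemma deg_transformed_of_ne [Finite V] (hB : PathBridge G p S₁ S₂) {v : V} (hv₁ : v ≠ hB.first)
    (hv₂ : v ≠ hB.last) : deg hB.transformed v = deg G v :=
  deg_transferEdges_of_ne hB.not_adj_first hv₁ hv₂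

lemma ncard_neighborSet_last_pos [Finite V] (hB : PathBridge G p S₁ S₂) :
    0 < (G.neighborSet hB.last ∩ S₂).ncard := by
  obtain ⟨z, hz, h⟩ :=
    exists_adj_of_connected_induce hB.connected_right hB.two_le_ncard_right hB.last_mem_right
  exact (Set.ncard_pos).2 ⟨z, h, hz⟩

lemma two_le_deg_first [Finite V] (hB : PathBridge G p S₁ S₂) : 2 ≤ deg G hB.first := by
  obtain ⟨z, hz, h⟩ :=
    exists_adj_of_connected_induce hB.connected_left hB.two_le_ncard_left hB.first_mem_left
  have hl : 1 < l := hB.two_le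
  have h₁ : G.Adj hB.first (p ⟨1, hl⟩) := hB.adj_succ ⟨0, hB.pos⟩ hl
  have hne : z ≠ p ⟨1, hl⟩ := fun h' => one_ne_zero ((hB.mem_left_iff _).1 (h' ▸ hz))
  calc 2 = ({z, p ⟨1, hl⟩} : Set V).ncard := (Set.ncard_pair hne).symm
    _ ≤ deg G hB.first := Set.ncard_le_ncard (Set.pair_subset h h₁)

lemma div_ecc_le_of_notMem_range [Finite V] (hB : PathBridge G p S₁ S₂) {v : V}
    (hv : v ∉ Set.range p) :
    (deg G v : ℝ) / ecc G v ≤ deg hB.transformed v / ecc hB.transformed v := by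
  have hecc : ecc hB.transformed v ≤ ecc G v := by
    rcases hB.left_or_path_or_right v with hv' | hv' | ⟨hv', hv''⟩
    · exact hB.ecc_transformed_le_of_mem_left hv'
    · exact absurd hv' hv
    · exact hB.ecc_transformed_le_of_mem_right hv' hv''
  rw [hB.deg_transformed_of_ne (fun h => hv ⟨_, h.symm⟩) (fun h => hv ⟨_, h.symm⟩)]
  exact div_le_div_of_nonneg_left (Nat.cast_nonneg _)
    (Nat.cast_pos.2 (hB.ecc_transformed_pos v)) (Nat.cast_le.2 hecc)

lemma div_ecc_path_le [Finite V] (hB : PathBridge G p S₁ S₂) {i j : Fin l} (hi : 0 < (i : ℕ))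
    (hi' : (i : ℕ) < l - 1) (hj : 0 < (j : ℕ)) (hj' : (j : ℕ) < l - 1)
    (hecc : ecc hB.transformed (p i) ≤ ecc G (p j)) :
    (deg G (p j) : ℝ) / ecc G (p j) ≤ deg hB.transformed (p i) / ecc hB.transformed (p i) := by
  rw [hB.deg_eq_two j hj hj', hB.deg_transformed_of_ne (hB.path_ne_first hi)
    (hB.path_ne_last hi'), hB.deg_eq_two i hi hi']
  exact div_le_div_of_nonneg_left (Nat.cast_nonneg _)
    (Nat.cast_pos.2 (hB.ecc_transformed_pos _)) (Nat.cast_le.2 hecc)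

lemma ree_lt_of_perm [Fintype V] (hB : PathBridge G p S₁ S₂) (σ : Equiv.Perm V)
    (hσ : σ hB.first = hB.first ∧ σ hB.last = hB.last ∨
      σ hB.first = hB.last ∧ σ hB.last = hB.first)
    (hσ_off : ∀ v ∉ Set.range p, σ v = v)
    (hσ_path : ∀ i : Fin l, 0 < (i : ℕ) → (i : ℕ) < l - 1 → ∃ j : Fin l, 0 < (j : ℕ) ∧
      (j : ℕ) < l - 1 ∧ σ (p i) = p j ∧ ecc hB.transformed (p i) ≤ ecc G (p j))
    (hends : (deg G hB.first : ℝ) / ecc G hB.first + deg G hB.last / ecc G hB.last <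
      deg hB.transformed hB.first / ecc hB.transformed hB.first +
        deg hB.transformed hB.last / ecc hB.transformed hB.last) :
    ree G < ree hB.transformed := by
  classical
  rw [ree_eq_sum_deg_div_ecc, ree_eq_sum_deg_div_ecc]
  refine Finset.sum_lt_sum_of_perm σ hB.first_ne_last hσ (fun v hv₁ hv₂ => ?_) hends
  by_cases hv : v ∈ Set.range p
  · obtain ⟨i, rfl⟩ := hv
    have hi : 0 < (i : ℕ) := Nat.pos_of_ne_zero fun h => hv₁ (congrArg p (Fin.ext h))
    have hi' : (i : ℕ) < l - 1 := lt_of_le_of_ne (Nat.le_sub_one_of_lt i.isLt)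
      fun h => hv₂ (congrArg p (Fin.ext h))
    obtain ⟨j, hj, hj', hσj, hecc⟩ := hσ_path i hi hi'
    rw [hσj]
    exact hB.div_ecc_path_le hi hi' hj hj' hecc
  · rw [hσ_off v hv]
    exact hB.div_ecc_le_of_notMem_range hv

lemma le_sum_endpoints_transformed [Finite V] (hB : PathBridge G p S₁ S₂) :
    ((deg G hB.first + (G.neighborSet hB.last ∩ S₂).ncard : ℕ) : ℝ) /
        (max (max (maxDistOn G hB.first S₁) (maxDistOn G hB.last S₂)) (l - 1) : ℕ) +
      1 / ((l - 1 + max (maxDistOn G hB.first S₁) (maxDistOn G hB.last S₂) : ℕ) : ℝ) ≤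
    deg hB.transformed hB.first / ecc hB.transformed hB.first +
      deg hB.transformed hB.last / ecc hB.transformed hB.last := by
  have h₁ := hB.ecc_transformed_path_le ⟨0, hB.pos⟩
  have h₂ := hB.ecc_transformed_path_le ⟨l - 1, hB.sub_one_lt⟩
  simp only [zero_add, Nat.sub_zero, Nat.sub_self, max_eq_left (Nat.zero_le _)] at h₁ h₂
  have h₁' := hB.ecc_transformed_pos hB.first
  have h₂' := hB.ecc_transformed_pos hB.last
  rw [hB.deg_transformed_first, hB.deg_transformed_last, Nat.cast_one]
  gcongr
  exacts [h₁, h₂]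

lemma sum_endpoints_lt_of_le [Finite V] (hB : PathBridge G p S₁ S₂)
    (hba : maxDistOn G hB.last S₂ ≤ maxDistOn G hB.first S₁) :
    (deg G hB.first : ℝ) / ecc G hB.first + deg G hB.last / ecc G hB.last <
      deg hB.transformed hB.first / ecc hB.transformed hB.first +
        deg hB.transformed hB.last / ecc hB.transformed hB.last := by
  have hends := hB.le_sum_endpoints_transformed
  rw [max_eq_left hba] at hends
  set a := maxDistOn G hB.first S₁
  set k := (G.neighborSet hB.last ∩ S₂).ncard
  have hl := hB.two_le
  have ha : 1 ≤ a := one_le_maxDistOn hB.connected hB.two_le_ncard_left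
  have hk := hB.ncard_neighborSet_last_pos
  have hM : max a (l - 1) ≤ ecc G hB.first := by
    have : 0 + a ≤ ecc G hB.first := hB.add_maxDistOn_left_le_ecc ⟨0, hB.pos⟩
    have : l - 1 - 0 + _ ≤ ecc G hB.first := hB.add_maxDistOn_right_le_ecc ⟨0, hB.pos⟩
    omega
  have hL : l - 1 + a ≤ ecc G hB.last := hB.add_maxDistOn_left_le_ecc ⟨l - 1, hB.sub_one_lt⟩
  have hML : max a (l - 1) < l - 1 + a := by omega
  calc (deg G hB.first : ℝ) / ecc G hB.first + deg G hB.last / ecc G hB.last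
      ≤ deg G hB.first / (max a (l - 1) : ℕ) + (1 + k : ℕ) / (l - 1 + a : ℕ) := by
        rw [hB.deg_last]
        gcongr
    _ < (deg G hB.first + k : ℕ) / (max a (l - 1) : ℕ) + (1 : ℕ) / (l - 1 + a : ℕ) :=
        div_add_div_lt_div_add_div (by positivity) (by exact_mod_cast hML)
          (by push_cast; ring) (by exact_mod_cast (by omega : deg G hB.first < _ + k))
    _ ≤ _ := by simpa using hends

lemma sum_endpoints_lt_of_lt [Finite V] (hB : PathBridge G p S₁ S₂)
    (hab : maxDistOn G hB.first S₁ < maxDistOn G hB.last S₂) :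
    (deg G hB.first : ℝ) / ecc G hB.first + deg G hB.last / ecc G hB.last <
      deg hB.transformed hB.first / ecc hB.transformed hB.first +
        deg hB.transformed hB.last / ecc hB.transformed hB.last := by
  have hends := hB.le_sum_endpoints_transformed
  rw [max_eq_right hab.le] at hends
  set b := maxDistOn G hB.last S₂
  set k := (G.neighborSet hB.last ∩ S₂).ncard
  have hl := hB.two_le
  have hb : 1 ≤ b := one_le_maxDistOn hB.connected hB.two_le_ncard_right
  have hd := hB.two_le_deg_first
  have hL : l - 1 - 0 + b ≤ ecc G hB.first := hB.add_maxDistOn_right_le_ecc ⟨0, hB.pos⟩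
  rw [Nat.sub_zero] at hL
  have hM : max b (l - 1) ≤ ecc G hB.last := by
    have : l - 1 + _ ≤ ecc G hB.last := hB.add_maxDistOn_left_le_ecc ⟨l - 1, hB.sub_one_lt⟩
    have : l - 1 - (l - 1) + b ≤ ecc G hB.last :=
      hB.add_maxDistOn_right_le_ecc ⟨l - 1, hB.sub_one_lt⟩
    omega
  have hML : max b (l - 1) < l - 1 + b := by omega
  calc (deg G hB.first : ℝ) / ecc G hB.first + deg G hB.last / ecc G hB.last
      ≤ deg G hB.first / (l - 1 + b : ℕ) + (1 + k : ℕ) / (max b (l - 1) : ℕ) := by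
        rw [hB.deg_last]
        gcongr
    _ = (1 + k : ℕ) / (max b (l - 1) : ℕ) + deg G hB.first / (l - 1 + b : ℕ) := add_comm _ _
    _ < (deg G hB.first + k : ℕ) / (max b (l - 1) : ℕ) + (1 : ℕ) / (l - 1 + b : ℕ) :=
        div_add_div_lt_div_add_div (by positivity) (by exact_mod_cast hML)
          (by push_cast; ring) (by exact_mod_cast (by omega : 1 + k < deg G hB.first + k))
    _ ≤ _ := by simpa using hends

lemma ree_lt_of_le [Fintype V] (hB : PathBridge G p S₁ S₂)
    (hba : maxDistOn G hB.last S₂ ≤ maxDistOn G hB.first S₁) :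
    ree G < ree hB.transformed := by
  refine hB.ree_lt_of_perm 1 (.inl ⟨rfl, rfl⟩) (fun _ _ => rfl)
    (fun i hi hi' => ⟨i, hi, hi', rfl, ?_⟩) (hB.sum_endpoints_lt_of_le hba)
  refine (hB.ecc_transformed_path_le i).trans ?_
  rw [max_eq_left hba]
  exact max_le (hB.add_maxDistOn_left_le_ecc i)
    (le_self_add.trans (hB.add_maxDistOn_right_le_ecc i))

lemma ree_lt_of_lt [Fintype V] (hB : PathBridge G p S₁ S₂)
    (hab : maxDistOn G hB.first S₁ < maxDistOn G hB.last S₂) :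
    ree G < ree hB.transformed := by
  have hl := hB.two_le
  have hrev : ∀ i : Fin l, (i.rev : ℕ) = l - 1 - i := fun i => by simp only [Fin.val_rev]; omega
  have hσ₀ : pathReverse hB.injective hB.first = hB.last :=
    (pathReverse_apply _ _).trans (congrArg p (Fin.ext (by simp)))
  have hσ₁ : pathReverse hB.injective hB.last = hB.first :=
    (pathReverse_apply _ _).trans (congrArg p (Fin.ext (by simp only [hrev]; omega)))
  refine hB.ree_lt_of_perm (pathReverse hB.injective) (.inr ⟨hσ₀, hσ₁⟩)
    (fun _ => pathReverse_apply_of_notMem _) (fun i hi hi' =>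
      ⟨i.rev, by rw [hrev]; omega, by rw [hrev]; omega, pathReverse_apply _ _, ?_⟩)
    (hB.sum_endpoints_lt_of_lt hab)
  refine (hB.ecc_transformed_path_le i).trans ?_
  rw [max_eq_right hab.le]
  have := hB.add_maxDistOn_left_le_ecc i.rev
  have := hB.add_maxDistOn_right_le_ecc i.rev
  rw [hrev] at *
  omega

lemma ree_lt [Fintype V] (hB : PathBridge G p S₁ S₂) : ree G < ree hB.transformed :=
  (le_or_gt (maxDistOn G hB.last S₂) (maxDistOn G hB.first S₁)).elim hB.ree_lt_of_le
    hB.ree_lt_of_lt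

end PathBridge

/-- the α-transformation strictly increases the total reciprocal
edge-eccentricity. -/
theorem stmt3 [Fintype V] (G : SimpleGraph V) (hG : G.Connected)
    -- the path v_1 v_2 … v_l (here `p i` is `v_{i+1}`), l ≥ 2
    (l : ℕ) (hl : 2 ≤ l) (p : Fin l → V) (hinj : Function.Injective p)
    (hchain : ∀ i : Fin l, ∀ h : (i : ℕ) + 1 < l, G.Adj (p i) (p ⟨(i : ℕ) + 1, h⟩))
    -- H_1 and H_2 are the induced subgraphs on S1 and S2
    (S1 S2 : Set V) (h1conn : (G.induce S1).Connected) (h2conn : (G.induce S2).Connected)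
    (h1card : 2 ≤ S1.ncard) (h2card : 2 ≤ S2.ncard)
    (hdisj : S1 ∩ S2 = ∅)
    (hS1p : S1 ∩ Set.range p = {p ⟨0, by omega⟩})
    (hS2p : S2 ∩ Set.range p = {p ⟨l - 1, by omega⟩})
    (hcover : (Set.univ : Set V) = S1 ∪ Set.range p ∪ S2)
    -- every edge of G_1 lies in H_1, in H_2, or on the path
    (hedges : ∀ x y, G.Adj x y → (x ∈ S1 ∧ y ∈ S1) ∨ (x ∈ S2 ∧ y ∈ S2) ∨
      ∃ i : Fin l, ∃ h : (i : ℕ) + 1 < l, s(x, y) = s(p i, p ⟨(i : ℕ) + 1, h⟩))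
    -- the internal vertices of the path have degree 2 in G_1
    (hdeg : ∀ i : Fin l, 0 < (i : ℕ) → (i : ℕ) < l - 1 → deg G (p i) = 2) :
    ree G < ree ((G.deleteEdges {e | ∃ x ∈ S2, G.Adj (p ⟨l - 1, by omega⟩) x ∧
        e = s(p ⟨l - 1, by omega⟩, x)}) ⊔
      SimpleGraph.fromEdgeSet {e | ∃ x ∈ S2, G.Adj (p ⟨l - 1, by omega⟩) x ∧
        e = s(p ⟨0, by omega⟩, x)}) :=
  (⟨hl, hG, hinj, hchain, h1conn, h2conn, h1card, h2card, hdisj, hS1p, hS2p, hcover, hedges,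
    hdeg⟩ : PathBridge G p S1 S2).ree_lt
end

section
/- Let G be a finite simple connected graph that is the union of: a connected subgraph H_1 containing a vertex u; a vertex v adjacent to u whose other neighbors are exactly k ≥ 1 pendant vertices v_1, …, v_k of G; and a connected subgraph H_2 with at least 2 vertices containing a vertex w, where uw is an edge of G that is a bridge, the sets V(H_1), V(H_2), {v, v_1, …, v_k} are pairwise disjoint, and the only edges of G outside H_1 and H_2 are uv, uw, and vv_1, …, vv_k. If the eccentricity of w within H_2 is at least the eccentricity of u within H_1, then the graph G[v→w;2] obtained from G by deleting the edges vv_1, …, vv_k and adding the edges wv_1, …, wv_k satisfies ξ^{ee}(G) < ξ^{ee}(G[v→w;2]). -/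
open SimpleGraph

variable {V : Type*}

section Aux

private lemma ecc_lb {W : Type*} [Finite W] (G : SimpleGraph W) (x y : W) :
    G.dist x y ≤ ecc G x :=
  le_ciSup (Set.Finite.bddAbove (Set.finite_range _)) y

private lemma ecc_ub {W : Type*} {G : SimpleGraph W} {x : W} {n : ℕ}
    (h : ∀ y, G.dist x y ≤ n) : ecc G x ≤ n := by
  have : Nonempty W := ⟨x⟩
  exact ciSup_le h

private lemma adj_dist_le_one {G : SimpleGraph V} {a b : V} (h : G.Adj a b) :
    G.dist a b ≤ 1 := by
  simpa using SimpleGraph.dist_le (SimpleGraph.Walk.cons h SimpleGraph.Walk.nil)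

private lemma dist_ge_two {G : SimpleGraph V} {x y : V} (hconn : G.Connected)
    (hne : x ≠ y) (hnadj : ¬ G.Adj x y) : 2 ≤ G.dist x y := by
  have h1 := hconn.pos_dist_of_ne hne
  have h2 : G.dist x y ≠ 1 := fun h => hnadj (SimpleGraph.dist_eq_one_iff_adj.mp h)
  omega

private lemma firststep {G : SimpleGraph V} {p q y : V} (hN : G.neighborSet p = {q})
    (hy : y ≠ p) (pw : G.Walk p y) : G.dist q y + 1 ≤ pw.length := by
  cases pw with
  | nil => exact absurd rfl hy
  | cons h rest =>
    rename_i n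
    have hn : n ∈ G.neighborSet p := h
    rw [hN, Set.mem_singleton_iff] at hn
    subst hn
    have := SimpleGraph.dist_le rest
    simp only [SimpleGraph.Walk.length_cons]
    omega

private lemma pend_dist {G : SimpleGraph V} {p q : V} (hconn : G.Connected)
    (hN : G.neighborSet p = {q}) {y : V} (hy : y ≠ p) :
    G.dist p y = G.dist q y + 1 := by
  have hadj : G.Adj p q := by
    have : q ∈ G.neighborSet p := by rw [hN]; exact rfl
    exact this
  apply le_antisymm
  · obtain ⟨pqy, hlen⟩ := hconn.exists_walk_length_eq_dist q y
    have := SimpleGraph.dist_le (SimpleGraph.Walk.cons hadj pqy)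
    simp only [SimpleGraph.Walk.length_cons] at this
    omega
  · obtain ⟨ppy, hlen⟩ := hconn.exists_walk_length_eq_dist p y
    have := firststep hN hy ppy
    omega

private lemma strip_v {G : SimpleGraph V} {u v : V} {k : ℕ} {vp : Fin k → V}
    (hNv : G.neighborSet v = {u} ∪ Set.range vp)
    (hNp : ∀ i, G.neighborSet (vp i) = {v}) :
    ∀ (L : ℕ) (y : V), y ≠ v → y ∉ Set.range vp →
      ∀ pw : G.Walk v y, pw.length ≤ L → G.dist u y + 1 ≤ pw.length := by
  intro L
  induction L with
  | zero =>
    intro y hyv _ pw hL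
    cases pw with
    | nil => exact absurd rfl hyv
    | cons h rest => simp at hL
  | succ L ih =>
    intro y hyv hyp pw hL
    cases pw with
    | nil => exact absurd rfl hyv
    | cons h rest =>
      rename_i n
      have hn : n ∈ G.neighborSet v := h
      rw [hNv] at hn
      rcases hn with hn | ⟨i, rfl⟩
      · rw [Set.mem_singleton_iff] at hn
        subst hn
        have := SimpleGraph.dist_le rest
        simp only [SimpleGraph.Walk.length_cons]
        omega
      · cases rest with
        | nil => exact absurd ⟨i, rfl⟩ hyp
        | cons h2 rest2 =>
          rename_i m
          have hm : m ∈ G.neighborSet (vp i) := h2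
          rw [hNp i, Set.mem_singleton_iff] at hm
          subst hm
          simp only [SimpleGraph.Walk.length_cons] at hL ⊢
          have := ih y hyv hyp rest2 (by omega)
          omega

private lemma strip_avoid {G G' : SimpleGraph V} {v : V} {k : ℕ} {vp : Fin k → V}
    (hNp : ∀ i, G.neighborSet (vp i) = {v}) (hv : v ∉ Set.range vp)
    (hle : ∀ {x z : V}, G.Adj x z → x ∉ Set.range vp → z ∉ Set.range vp → G'.Adj x z) :
    ∀ (L : ℕ) (x y : V), x ∉ Set.range vp → y ∉ Set.range vp →
      ∀ pw : G.Walk x y, pw.length ≤ L → ∃ q : G'.Walk x y, q.length ≤ pw.length := by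
  intro L
  induction L with
  | zero =>
    intro x y hx hy pw hL
    cases pw with
    | nil => exact ⟨SimpleGraph.Walk.nil, le_rfl⟩
    | cons h rest => simp at hL
  | succ L ih =>
    intro x y hx hy pw hL
    cases pw with
    | nil => exact ⟨SimpleGraph.Walk.nil, by simp⟩
    | cons h rest =>
      rename_i n
      by_cases hn : n ∈ Set.range vp
      · obtain ⟨i, rfl⟩ := hn
        have hxv : x = v := by
          have : x ∈ G.neighborSet (vp i) := h.symm
          rw [hNp i, Set.mem_singleton_iff] at this
          exact this
        subst hxv
        cases rest with
        | nil => exact absurd ⟨i, rfl⟩ hy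
        | cons h2 rest2 =>
          rename_i m
          have hm : m ∈ G.neighborSet (vp i) := h2
          rw [hNp i, Set.mem_singleton_iff] at hm
          subst hm
          simp only [SimpleGraph.Walk.length_cons] at hL ⊢
          obtain ⟨q, hq⟩ := ih _ y hx hy rest2 (by omega)
          exact ⟨q, by omega⟩
      · simp only [SimpleGraph.Walk.length_cons] at hL ⊢
        obtain ⟨q, hq⟩ := ih n y hn hy rest (by omega)
        exact ⟨SimpleGraph.Walk.cons (hle h hx hn) q,
          by simp only [SimpleGraph.Walk.length_cons]; omega⟩

private lemma strip_S2 {G : SimpleGraph V} {S2 : Set V} {u w : V} (hw : w ∈ S2)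
    (h2conn : (G.induce S2).Connected)
    (hbd : ∀ x z : V, G.Adj x z → x ∉ S2 → z ∈ S2 → x = u ∧ z = w) :
    ∀ {x y : V} (pw : G.Walk x y) (hy : y ∈ S2),
      (∀ hx : x ∈ S2, (G.induce S2).dist ⟨x, hx⟩ ⟨y, hy⟩ ≤ pw.length) ∧
      (x ∉ S2 → (G.induce S2).dist ⟨w, hw⟩ ⟨y, hy⟩ + 1 ≤ pw.length) := by
  intro x y pw
  induction pw with
  | nil =>
    intro hy
    constructor
    · intro hx
      exact le_of_eq SimpleGraph.dist_self
    · intro hx; exact absurd hy hx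
  | cons h rest ih =>
    rename_i a n c
    intro hy
    have ihr := ih hy
    constructor
    · intro hx
      by_cases hn : n ∈ S2
      · have hadj2 : (G.induce S2).Adj ⟨a, hx⟩ ⟨n, hn⟩ := by simpa using h
        have h1 := ihr.1 hn
        have h2 := h2conn.dist_triangle (u := (⟨a, hx⟩ : ↥S2)) (v := ⟨n, hn⟩) (w := ⟨c, hy⟩)
        have h3 := adj_dist_le_one hadj2
        simp only [SimpleGraph.Walk.length_cons]
        omega
      · obtain ⟨hnu, haw⟩ := hbd n a h.symm hn hx
        subst haw
        have h2 := ihr.2 hn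
        simp only [SimpleGraph.Walk.length_cons]
        have he : (⟨a, hx⟩ : ↥S2) = ⟨a, hw⟩ := rfl
        rw [he]
        omega
    · intro hx
      by_cases hn : n ∈ S2
      · obtain ⟨hxu, hnw⟩ := hbd a n h hx hn
        subst hnw
        have h1 := ihr.1 hn
        have he : (⟨n, hn⟩ : ↥S2) = ⟨n, hw⟩ := rfl
        rw [he] at h1
        simp only [SimpleGraph.Walk.length_cons]
        omega
      · have h2 := ihr.2 hn
        simp only [SimpleGraph.Walk.length_cons]
        omega

private lemma ree_eq_sum {W : Type*} [Fintype W] (G : SimpleGraph W) (s : Finset (Sym2 W))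
    (hs : ∀ e, e ∈ s ↔ e ∈ G.edgeSet) :
    ree G = ∑ e ∈ s,
      Sym2.lift ⟨fun a b => 1 / (ecc G a : ℝ) + 1 / (ecc G b : ℝ), fun _ _ => by ring⟩ e := by
  unfold ree
  apply Finset.sum_congr
  · ext e
    simp only [SimpleGraph.mem_edgeFinset]
    exact (hs e).symm
  · exact fun _ _ => rfl

end Aux

/-- the θ-transformation strictly increases the total reciprocal
edge-eccentricity. -/
theorem stmt5 [Fintype V] (G : SimpleGraph V) (hG : G.Connected)
    (S1 S2 : Set V) (u w v : V) (huS1 : u ∈ S1) (hwS2 : w ∈ S2)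
    (h1conn : (G.induce S1).Connected) (h2conn : (G.induce S2).Connected)
    (h2card : 2 ≤ S2.ncard)
    -- the k ≥ 1 pendant vertices v_1, …, v_k attached at v
    (k : ℕ) (hk : 1 ≤ k) (vp : Fin k → V) (hvpinj : Function.Injective vp)
    (huv : G.Adj u v) (huw : G.Adj u w) (hvvp : ∀ i : Fin k, G.Adj v (vp i))
    (hpend : ∀ i : Fin k, deg G (vp i) = 1)
    -- the neighbors of v are exactly u and the pendant vertices
    (hnbrv : G.neighborSet v = {u} ∪ Set.range vp)
    -- disjointness of the pieces
    (hdisj : S1 ∩ S2 = ∅) (hvS : v ∉ S1 ∪ S2) (hvpS : ∀ i : Fin k, vp i ∉ S1 ∪ S2)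
    (hvpv : ∀ i : Fin k, vp i ≠ v)
    (hcover : (Set.univ : Set V) = S1 ∪ S2 ∪ {v} ∪ Set.range vp)
    -- the only edges of G outside H_1 and H_2 are uv, uw and the pendant edges at v
    (hedges : ∀ x y, G.Adj x y → (x ∈ S1 ∧ y ∈ S1) ∨ (x ∈ S2 ∧ y ∈ S2) ∨
      s(x, y) = s(u, v) ∨ s(x, y) = s(u, w) ∨ ∃ i : Fin k, s(x, y) = s(v, vp i))
    -- uw is a bridge of G
    (hbridge : G.IsBridge s(u, w))
    -- eccentricity condition: ε_{H_2}(w) ≥ ε_{H_1}(u)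
    (hecc : ecc (G.induce S1) ⟨u, huS1⟩ ≤ ecc (G.induce S2) ⟨w, hwS2⟩) :
    ree G < ree ((G.deleteEdges {e | ∃ i : Fin k, e = s(v, vp i)}) ⊔
      SimpleGraph.fromEdgeSet {e | ∃ i : Fin k, e = s(w, vp i)}) := by
  classical
  set G' : SimpleGraph V := (G.deleteEdges {e | ∃ i : Fin k, e = s(v, vp i)}) ⊔
      SimpleGraph.fromEdgeSet {e | ∃ i : Fin k, e = s(w, vp i)} with hG'def
  have i0 : Fin k := ⟨0, hk⟩
  -- basic membership facts
  have huS2 : u ∉ S2 := fun h => by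
    have : u ∈ S1 ∩ S2 := ⟨huS1, h⟩
    rw [hdisj] at this; exact this
  have hvS1 : v ∉ S1 := fun h => hvS (Or.inl h)
  have hvS2 : v ∉ S2 := fun h => hvS (Or.inr h)
  have hvP : v ∉ Set.range vp := fun ⟨i, hi⟩ => hvpv i hi
  have huP : u ∉ Set.range vp := fun ⟨i, hi⟩ => hvpS i (hi ▸ Or.inl huS1)
  have hwP : w ∉ Set.range vp := fun ⟨i, hi⟩ => hvpS i (hi ▸ Or.inr hwS2)
  have hS1P : ∀ {y}, y ∈ S1 → y ∉ Set.range vp := fun hy ⟨i, hi⟩ => hvpS i (hi ▸ Or.inl hy)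
  have hS2P : ∀ {y}, y ∈ S2 → y ∉ Set.range vp := fun hy ⟨i, hi⟩ => hvpS i (hi ▸ Or.inr hy)
  have hS1v : ∀ {y}, y ∈ S1 → y ≠ v := fun hy h => hvS (h ▸ Or.inl hy)
  have hS2v : ∀ {y}, y ∈ S2 → y ≠ v := fun hy h => hvS (h ▸ Or.inr hy)
  have hwv : w ≠ v := hS2v hwS2
  -- the pendant vertices have a unique neighbor
  have hNvp : ∀ i, G.neighborSet (vp i) = {v} := by
    intro i
    have h1 := hpend i
    unfold deg at h1
    obtain ⟨z, hz⟩ := Set.ncard_eq_one.mp h1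
    have hv : v ∈ G.neighborSet (vp i) := (hvvp i).symm
    rw [hz, Set.mem_singleton_iff] at hv
    rw [hz, ← hv]
  have hnadj_wvp : ∀ i, ¬ G.Adj w (vp i) := by
    intro i h
    have : w ∈ G.neighborSet (vp i) := h.symm
    rw [hNvp i, Set.mem_singleton_iff] at this
    exact hwv this
  -- adjacency in the new graph
  have hG'le : ∀ {x z : V}, G.Adj x z → x ∉ Set.range vp → z ∉ Set.range vp → G'.Adj x z := by
    intro x z h hx hz
    rw [hG'def, SimpleGraph.sup_adj, SimpleGraph.deleteEdges_adj]
    left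
    refine ⟨h, ?_⟩
    rintro ⟨i, hei⟩
    rcases Sym2.eq_iff.mp hei with ⟨h1, h2⟩ | ⟨h1, h2⟩
    · exact hz ⟨i, h2.symm⟩
    · exact hx ⟨i, h1.symm⟩
  have hG'wvp : ∀ i, G'.Adj w (vp i) := by
    intro i
    rw [hG'def, SimpleGraph.sup_adj, SimpleGraph.fromEdgeSet_adj]
    exact Or.inr ⟨⟨i, rfl⟩, fun h => hwP ⟨i, h.symm⟩⟩
  have hG'uv : G'.Adj u v := hG'le huv huP hvP
  have hG'uw : G'.Adj u w := hG'le huw huP hwP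
  -- distance facts in G
  have hdvpy : ∀ (i : Fin k) {y}, y ≠ vp i → G.dist (vp i) y = G.dist v y + 1 := by
    intro i y hy
    exact pend_dist hG (hNvp i) hy
  have hdvy : ∀ {y}, y ≠ v → y ∉ Set.range vp → G.dist v y = G.dist u y + 1 := by
    intro y hyv hyp
    apply le_antisymm
    · obtain ⟨q, hq⟩ := hG.exists_walk_length_eq_dist u y
      have := SimpleGraph.dist_le (SimpleGraph.Walk.cons huv.symm q)
      simp only [SimpleGraph.Walk.length_cons] at this
      omega
    · obtain ⟨q, hq⟩ := hG.exists_walk_length_eq_dist v y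
      have := strip_v hnbrv hNvp q.length y hyv hyp q le_rfl
      omega
  have hdvpy2 : ∀ (i : Fin k) {y}, y ≠ v → y ∉ Set.range vp →
      G.dist (vp i) y = G.dist u y + 2 := by
    intro i y h1 h2
    rw [hdvpy i (fun he => h2 ⟨i, he.symm⟩), hdvy h1 h2]
  -- transfer of walks avoiding pendant vertices into G'
  have h_avoid : ∀ (x y : V), x ∉ Set.range vp → y ∉ Set.range vp →
      ∃ q : G'.Walk x y, q.length ≤ G.dist x y := by
    intro x y hx hy
    obtain ⟨p, hp⟩ := hG.exists_walk_length_eq_dist x y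
    obtain ⟨q, hq⟩ := strip_avoid hNvp hvP hG'le p.length x y hx hy p le_rfl
    exact ⟨q, by omega⟩
  have hdist' : ∀ {x y : V}, x ∉ Set.range vp → y ∉ Set.range vp →
      G'.dist x y ≤ G.dist x y := by
    intro x y hx hy
    obtain ⟨q, hq⟩ := h_avoid x y hx hy
    exact le_trans (SimpleGraph.dist_le q) hq
  -- the boundary of S2 is the bridge uw
  have hbd : ∀ x z : V, G.Adj x z → x ∉ S2 → z ∈ S2 → x = u ∧ z = w := by
    intro x z h hx hz
    rcases hedges x z h with ⟨h1, h2⟩ | ⟨h1, h2⟩ | he | he | ⟨i, he⟩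
    · exfalso
      have : z ∈ S1 ∩ S2 := ⟨h2, hz⟩
      rw [hdisj] at this; exact this
    · exact absurd h1 hx
    · exfalso
      rcases Sym2.eq_iff.mp he with ⟨h1, h2⟩ | ⟨h1, h2⟩
      · exact hvS2 (h2 ▸ hz)
      · exact huS2 (h2 ▸ hz)
    · rcases Sym2.eq_iff.mp he with ⟨h1, h2⟩ | ⟨h1, h2⟩
      · exact ⟨h1, h2⟩
      · exact absurd (h2 ▸ hz) huS2
    · exfalso
      rcases Sym2.eq_iff.mp he with ⟨h1, h2⟩ | ⟨h1, h2⟩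
      · exact hvpS i (h2 ▸ Or.inr hz)
      · exact hvS2 (h2 ▸ hz)
  have hB : ∀ (y) (hy : y ∈ S2), (G.induce S2).dist ⟨w, hwS2⟩ ⟨y, hy⟩ + 1 ≤ G.dist u y := by
    intro y hy
    obtain ⟨p, hp⟩ := hG.exists_walk_length_eq_dist u y
    have := (strip_S2 hwS2 h2conn hbd p hy).2 huS2
    omega
  -- induced distances dominate ambient distances (easy direction)
  have hienS2 : ∀ (y) (hy : y ∈ S2), G.dist w y ≤ (G.induce S2).dist ⟨w, hwS2⟩ ⟨y, hy⟩ := by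
    intro y hy
    obtain ⟨q, hq⟩ := h2conn.exists_walk_length_eq_dist ⟨w, hwS2⟩ ⟨y, hy⟩
    have := SimpleGraph.dist_le (q.map (SimpleGraph.Embedding.induce S2).toHom)
    rw [SimpleGraph.Walk.length_map, hq] at this
    exact this
  have hienS1 : ∀ (y) (hy : y ∈ S1), G.dist u y ≤ (G.induce S1).dist ⟨u, huS1⟩ ⟨y, hy⟩ := by
    intro y hy
    obtain ⟨q, hq⟩ := h1conn.exists_walk_length_eq_dist ⟨u, huS1⟩ ⟨y, hy⟩
    have := SimpleGraph.dist_le (q.map (SimpleGraph.Embedding.induce S1).toHom)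
    rw [SimpleGraph.Walk.length_map, hq] at this
    exact this
  set b := ecc (G.induce S2) ⟨w, hwS2⟩ with hbdef
  have hS1b : ∀ (y) (_ : y ∈ S1), G.dist u y ≤ b := fun y hy =>
    le_trans (hienS1 y hy) (le_trans (ecc_lb _ _ _) hecc)
  have hS2ne : Nonempty ↥S2 := ⟨⟨w, hwS2⟩⟩
  obtain ⟨zs, hzs⟩ := Finite.exists_max (fun z : ↥S2 => (G.induce S2).dist ⟨w, hwS2⟩ z)
  have hble : b ≤ (G.induce S2).dist ⟨w, hwS2⟩ zs := ecc_ub hzs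
  -- a vertex of S2 distinct from w
  obtain ⟨y0, hy0S2, hy0w⟩ := Set.exists_ne_of_one_lt_ncard (s := S2) (by omega) w
  have hy0u : y0 ≠ u := fun h => huS2 (h ▸ hy0S2)
  have hy0nadj : ¬ G.Adj u y0 := by
    intro h
    rcases hedges u y0 h with ⟨h1, h2⟩ | ⟨h1, h2⟩ | he | he | ⟨i, he⟩
    · have : y0 ∈ S1 ∩ S2 := ⟨h2, hy0S2⟩
      rw [hdisj] at this; exact this
    · exact huS2 h1
    · rcases Sym2.eq_iff.mp he with ⟨h1, h2⟩ | ⟨h1, h2⟩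
      · exact hvS2 (h2 ▸ hy0S2)
      · exact huv.ne h1
    · rcases Sym2.eq_iff.mp he with ⟨h1, h2⟩ | ⟨h1, h2⟩
      · exact hy0w h2
      · exact huS2 (h2 ▸ hy0S2)
    · rcases Sym2.eq_iff.mp he with ⟨h1, h2⟩ | ⟨h1, h2⟩
      · exact hvS1 (h1 ▸ huS1)
      · exact huP ⟨i, h1.symm⟩
  have hy0dist : 2 ≤ G.dist u y0 := dist_ge_two hG (fun h => hy0u h.symm) hy0nadj
  -- lower bounds on eccentricities in G
  have E1 : ∀ {x}, x ≠ v → x ∉ Set.range vp → G.dist x u + 2 ≤ ecc G x := by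
    intro x hxv hxp
    have h1 := ecc_lb G x (vp i0)
    have h2 := hdvpy2 i0 hxv hxp
    have hc : G.dist x (vp i0) = G.dist (vp i0) x := SimpleGraph.dist_comm
    have hc2 : G.dist x u = G.dist u x := SimpleGraph.dist_comm
    omega
  have E2a : ∀ {y}, y ≠ v → y ∉ Set.range vp → G.dist u y + 1 ≤ ecc G v := by
    intro y h1 h2
    have h3 := ecc_lb G v y
    rw [hdvy h1 h2] at h3
    exact h3
  have E2b : 3 ≤ ecc G v := by
    have := E2a (hS2v hy0S2) (hS2P hy0S2)
    omega
  have E3 : ∀ (i : Fin k) {y}, y ≠ v → y ∉ Set.range vp →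
      G.dist u y + 2 ≤ ecc G (vp i) := by
    intro i y h1 h2
    have h3 := ecc_lb G (vp i) y
    rw [hdvpy2 i h1 h2] at h3
    exact h3
  have E3c : ∀ i, 4 ≤ ecc G (vp i) := by
    intro i
    have := E3 i (hS2v hy0S2) (hS2P hy0S2)
    omega
  have E3b : ∀ i, b + 3 ≤ ecc G (vp i) := by
    intro i
    have hzv := zs.2
    have h1 := E3 i (hS2v hzv) (hS2P hzv)
    have h2 := hB zs hzv
    have h3 : (⟨(zs : V), hzv⟩ : ↥S2) = zs := rfl
    rw [h3] at h2
    omega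
  have E3d : ∀ (i : Fin k) (y) (_ : y ∈ S2), G.dist w y + 3 ≤ ecc G (vp i) := by
    intro i y hy
    have h1 := E3 i (hS2v hy) (hS2P hy)
    have h2 := hB y hy
    have h3 := hienS2 y hy
    omega
  have E3e : ∀ (i : Fin k) (y) (_ : y ∈ S1), G.dist u y + 3 ≤ ecc G (vp i) := by
    intro i y hy
    have h1 := hS1b y hy
    have h2 := E3b i
    omega
  -- cover of the vertex set
  have hcov : ∀ x : V, x ∈ S1 ∨ x ∈ S2 ∨ x = v ∨ x ∈ Set.range vp := by
    intro x
    have hx : x ∈ S1 ∪ S2 ∪ {v} ∪ Set.range vp := hcover ▸ Set.mem_univ x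
    rcases hx with ((h | h) | h) | h
    · exact Or.inl h
    · exact Or.inr (Or.inl h)
    · exact Or.inr (Or.inr (Or.inl h))
    · exact Or.inr (Or.inr (Or.inr h))
  -- upper bounds on eccentricities in G'
  have U_rest : ∀ {x}, x ∈ S1 ∪ S2 → ecc G' x ≤ ecc G x := by
    intro x hx
    have hxv : x ≠ v := fun h => hvS (h ▸ hx)
    have hxp : x ∉ Set.range vp := fun ⟨i, hi⟩ => hvpS i (hi ▸ hx)
    apply ecc_ub
    intro y
    rcases hcov y with hy | hy | rfl | ⟨i, rfl⟩
    · exact le_trans (hdist' hxp (hS1P hy)) (ecc_lb G x y)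
    · exact le_trans (hdist' hxp (hS2P hy)) (ecc_lb G x y)
    · exact le_trans (hdist' hxp hvP) (ecc_lb G x y)
    · obtain ⟨q, hq⟩ := h_avoid x w hxp hwP
      have hlen := SimpleGraph.dist_le (q.concat (hG'wvp i))
      rw [SimpleGraph.Walk.length_concat] at hlen
      have htri := hG.dist_triangle (u := x) (v := u) (w := w)
      have hadj1 : G.dist u w ≤ 1 := adj_dist_le_one huw
      have hE := E1 hxv hxp
      omega
  have U_v : ecc G' v ≤ ecc G v := by
    apply ecc_ub
    intro y
    rcases hcov y with hy | hy | rfl | ⟨i, rfl⟩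
    · exact le_trans (hdist' hvP (hS1P hy)) (ecc_lb G v y)
    · exact le_trans (hdist' hvP (hS2P hy)) (ecc_lb G v y)
    · rw [SimpleGraph.dist_self]; omega
    · have hlen := SimpleGraph.dist_le (SimpleGraph.Walk.cons hG'uv.symm
        (SimpleGraph.Walk.cons hG'uw (SimpleGraph.Walk.cons (hG'wvp i) SimpleGraph.Walk.nil)))
      simp only [SimpleGraph.Walk.length_cons, SimpleGraph.Walk.length_nil] at hlen
      omega
  have U_w : ecc G' w ≤ ecc G v := by
    apply ecc_ub
    intro y
    rcases hcov y with hy | hy | rfl | ⟨i, rfl⟩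
    · have h1 := hdist' hwP (hS1P hy)
      have h2 := hG.dist_triangle (u := w) (v := u) (w := y)
      have h3 : G.dist w u ≤ 1 := adj_dist_le_one huw.symm
      have h4 := E2a (hS1v hy) (hS1P hy)
      omega
    · have h1 := hdist' hwP (hS2P hy)
      have h2 := hG.dist_triangle (u := w) (v := u) (w := y)
      have h3 : G.dist w u ≤ 1 := adj_dist_le_one huw.symm
      have h4 := E2a (hS2v hy) (hS2P hy)
      omega
    · have hlen := SimpleGraph.dist_le (SimpleGraph.Walk.cons hG'uw.symm
        (SimpleGraph.Walk.cons hG'uv SimpleGraph.Walk.nil))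
      simp only [SimpleGraph.Walk.length_cons, SimpleGraph.Walk.length_nil] at hlen
      omega
    · have h1 : G'.dist w (vp i) ≤ 1 := adj_dist_le_one (hG'wvp i)
      omega
  have U_strict : ∀ i, ecc G' (vp i) < ecc G (vp i) := by
    intro i
    have hM := E3c i
    have hub : ecc G' (vp i) ≤ ecc G (vp i) - 1 := by
      apply ecc_ub
      intro y
      rcases hcov y with hy | hy | rfl | ⟨j, rfl⟩
      · obtain ⟨q, hq⟩ := h_avoid u y huP (hS1P hy)
        have hlen := SimpleGraph.dist_le (SimpleGraph.Walk.cons (hG'wvp i).symm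
          (SimpleGraph.Walk.cons hG'uw.symm q))
        simp only [SimpleGraph.Walk.length_cons] at hlen
        have := E3e i y hy
        omega
      · obtain ⟨q, hq⟩ := h_avoid w y hwP (hS2P hy)
        have hlen := SimpleGraph.dist_le (SimpleGraph.Walk.cons (hG'wvp i).symm q)
        simp only [SimpleGraph.Walk.length_cons] at hlen
        have := E3d i y hy
        omega
      · have hlen := SimpleGraph.dist_le (SimpleGraph.Walk.cons (hG'wvp i).symm
          (SimpleGraph.Walk.cons hG'uw.symm (SimpleGraph.Walk.cons hG'uv SimpleGraph.Walk.nil)))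
        simp only [SimpleGraph.Walk.length_cons, SimpleGraph.Walk.length_nil] at hlen
        omega
      · have hlen := SimpleGraph.dist_le (SimpleGraph.Walk.cons (hG'wvp i).symm
          (SimpleGraph.Walk.cons (hG'wvp j) SimpleGraph.Walk.nil))
        simp only [SimpleGraph.Walk.length_cons, SimpleGraph.Walk.length_nil] at hlen
        omega
    omega
  have U_main : ∀ x, ecc G' x ≤ ecc G x := by
    intro x
    rcases hcov x with hx | hx | rfl | ⟨i, rfl⟩
    · exact U_rest (Or.inl hx)
    · exact U_rest (Or.inr hx)
    · exact U_v
    · exact le_of_lt (U_strict i)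
  -- positivity
  have hpos' : ∀ {x z : V}, G'.Adj x z → 1 ≤ ecc G' x := by
    intro x z h
    have h1 : 0 < G'.dist x z := (h.reachable).pos_dist_of_ne h.ne
    exact le_trans h1 (ecc_lb G' x z)
  -- now the edge sums
  set Df : Finset (Sym2 V) := Finset.image (fun i => s(v, vp i)) Finset.univ with hDfdef
  set Af : Finset (Sym2 V) := Finset.image (fun i => s(w, vp i)) Finset.univ with hAfdef
  have hDfsub : Df ⊆ G.edgeFinset := by
    intro e he
    rw [hDfdef, Finset.mem_image] at he
    obtain ⟨i, _, rfl⟩ := he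
    rw [SimpleGraph.mem_edgeFinset, SimpleGraph.mem_edgeSet]
    exact hvvp i
  have hEG' : G'.edgeFinset = (G.edgeFinset \ Df) ∪ Af := by
    ext e
    simp only [Finset.mem_union, Finset.mem_sdiff, SimpleGraph.mem_edgeFinset]
    rw [hG'def, SimpleGraph.edgeSet_sup, SimpleGraph.edgeSet_deleteEdges,
      SimpleGraph.edgeSet_fromEdgeSet]
    constructor
    · rintro (⟨heG, heD⟩ | ⟨heA, hdiag⟩)
      · left
        refine ⟨heG, fun hDf => heD ?_⟩
        rw [hDfdef, Finset.mem_image] at hDf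
        obtain ⟨i, _, hei⟩ := hDf
        exact ⟨i, hei.symm⟩
      · right
        obtain ⟨i, hei⟩ := heA
        rw [hAfdef, Finset.mem_image]
        exact ⟨i, Finset.mem_univ i, hei.symm⟩
    · rintro (⟨heG, heDf⟩ | hAf)
      · left
        refine ⟨heG, fun ⟨i, hei⟩ => heDf ?_⟩
        rw [hDfdef, Finset.mem_image]
        exact ⟨i, Finset.mem_univ i, hei.symm⟩
      · right
        rw [hAfdef, Finset.mem_image] at hAf
        obtain ⟨i, _, rfl⟩ := hAf
        refine ⟨⟨i, rfl⟩, ?_⟩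
        exact fun h => hwP ⟨i, h.symm⟩
  have hdisjAf : Disjoint (G.edgeFinset \ Df) Af := by
    rw [Finset.disjoint_right]
    intro e heA heSd
    rw [hAfdef, Finset.mem_image] at heA
    obtain ⟨i, _, rfl⟩ := heA
    rw [Finset.mem_sdiff, SimpleGraph.mem_edgeFinset, SimpleGraph.mem_edgeSet] at heSd
    exact hnadj_wvp i heSd.1
  rw [ree_eq_sum G G.edgeFinset (fun e => SimpleGraph.mem_edgeFinset),
    ree_eq_sum G' G'.edgeFinset (fun e => SimpleGraph.mem_edgeFinset)]
  rw [hEG', Finset.sum_union hdisjAf, ← Finset.sum_sdiff hDfsub]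
  apply add_lt_add_of_le_of_lt
  · apply Finset.sum_le_sum
    intro e he
    rw [Finset.mem_sdiff] at he
    obtain ⟨heG, heD⟩ := he
    revert heG heD
    induction e using Sym2.ind with
    | _ x z =>
      intro heG heD
      rw [SimpleGraph.mem_edgeFinset, SimpleGraph.mem_edgeSet] at heG
      have hG'xz : G'.Adj x z := by
        rw [hG'def, SimpleGraph.sup_adj, SimpleGraph.deleteEdges_adj]
        left
        refine ⟨heG, fun ⟨i, hei⟩ => heD ?_⟩
        rw [hDfdef, Finset.mem_image]
        exact ⟨i, Finset.mem_univ i, hei.symm⟩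
      simp only [Sym2.lift_mk]
      have c1 : (0 : ℝ) < (ecc G' x : ℝ) := by
        exact_mod_cast lt_of_lt_of_le Nat.zero_lt_one (hpos' hG'xz)
      have c2 : (0 : ℝ) < (ecc G' z : ℝ) := by
        exact_mod_cast lt_of_lt_of_le Nat.zero_lt_one (hpos' hG'xz.symm)
      have d1 : (ecc G' x : ℝ) ≤ (ecc G x : ℝ) := by exact_mod_cast U_main x
      have d2 : (ecc G' z : ℝ) ≤ (ecc G z : ℝ) := by exact_mod_cast U_main z
      exact add_le_add (one_div_le_one_div_of_le c1 d1) (one_div_le_one_div_of_le c2 d2)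
  · rw [hDfdef, hAfdef, Finset.sum_image, Finset.sum_image]
    · apply Finset.sum_lt_sum_of_nonempty
      · exact ⟨i0, Finset.mem_univ i0⟩
      intro i _
      simp only [Sym2.lift_mk]
      have c1 : (0 : ℝ) < (ecc G' w : ℝ) := by
        exact_mod_cast lt_of_lt_of_le Nat.zero_lt_one (hpos' (hG'wvp i0))
      have c2 : (0 : ℝ) < (ecc G' (vp i) : ℝ) := by
        exact_mod_cast lt_of_lt_of_le Nat.zero_lt_one (hpos' (hG'wvp i).symm)
      have d1 : (ecc G' w : ℝ) ≤ (ecc G v : ℝ) := by exact_mod_cast U_w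
      have d2 : (ecc G' (vp i) : ℝ) < (ecc G (vp i) : ℝ) := by exact_mod_cast U_strict i
      exact add_lt_add_of_le_of_lt (one_div_le_one_div_of_le c1 d1)
        (one_div_lt_one_div_of_lt c2 d2)
    · intro i _ j _ hij
      rcases Sym2.eq_iff.mp hij with ⟨h1, h2⟩ | ⟨h1, h2⟩
      · exact hvpinj h2
      · exact absurd h1.symm (fun h => hwP ⟨j, h⟩)
    · intro i _ j _ hij
      rcases Sym2.eq_iff.mp hij with ⟨h1, h2⟩ | ⟨h1, h2⟩
      · exact hvpinj h2
      · exact absurd h2 (hvpv i)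
end

section
/- Let T be a tree on n vertices with matching number 2. Then ξ^{ee}(T) ≤ (5n−4)/6, with equality if and only if T is isomorphic to a double star P_2(a,b) for some integers a, b ≥ 1 with a + b = n − 2. -/
open SimpleGraph

variable {V : Type*}

/-- The matching number of a graph: the maximum number of pairwise disjoint edges. -/
noncomputable def matchNum {W : Type*} (G : SimpleGraph W) : ℕ :=
  sSup {m | ∃ s : Set (Sym2 W), s ⊆ G.edgeSet ∧
    (s.Pairwise fun e f => ∀ x, x ∈ e → x ∉ f) ∧ s.ncard = m}

/-- The double star `P_2(a,b)`: an edge `uv` (vertices 0 and 1) with `a` pendant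
vertices attached to `u` (vertices 2, …, a+1) and `b` pendant vertices attached
to `v` (vertices a+2, …, a+b+1). -/
def doubleStar (a b : ℕ) : SimpleGraph (Fin (a + b + 2)) :=
  SimpleGraph.fromRel (fun x y => (x.val = 0 ∧ y.val = 1) ∨
    (x.val = 0 ∧ 2 ≤ y.val ∧ y.val < a + 2) ∨ (x.val = 1 ∧ a + 2 ≤ y.val))

/-!
A matching `{a₁b₁, a₂b₂}` of a tree `T` with `ν(T) = 2` meets every edge, since a third disjoint
edge would give `ν(T) ≥ 3`. If `T` contains a path `p₀ ⋯ p₄`, this forces `{p₁, p₃}` to be a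
vertex cover, and `T` is a double star whose central edge `p₁p₃` is subdivided by `p₂`. Otherwise
`T` contains a path `p₀ ⋯ p₃` (through the two matching edges), `{p₁, p₂}` is a vertex cover, and
`T` is a double star `P₂(a, b)`. In both shapes all eccentricities are explicit, and writing
`ξ^{ee}(T) = ∑ᵥ deg v / ε v` and using `∑ᵥ deg v = 2n - 2` gives `ξ^{ee} = (5n - 4) / 6` for
the double star and `ξ^{ee} = (7n - 1) / 12 < (5n - 4) / 6` for the subdivided one. Two double
stars with the same numbers of leaves are isomorphic because both are pulled back from the path
`doubleStar 1 1` along maps with equinumerous fibres.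
-/

open Finset

theorem Finset.sum_univ_eq_sum_add_card_compl_mul {ι : Type*} [Fintype ι] [DecidableEq ι]
    (s : Finset ι) {f : ι → ℝ} {c : ℝ} (hf : ∀ x ∉ s, f x = c) :
    ∑ x, f x = ∑ x ∈ s, f x + (Fintype.card ι - #s) * c := by
  rw [← sum_add_sum_compl s f, sum_congr rfl fun x hx => hf x (mem_compl.1 hx), sum_const,
    card_compl, nsmul_eq_mul, Nat.cast_sub (card_le_univ s)]

namespace SimpleGraph

section Acyclic

variable {V : Type*} {G : SimpleGraph V} {a b c d e v w : V}

theorem IsAcyclic.length_eq_of_isPath (hG : G.IsAcyclic) {p q : G.Walk v w} (hp : p.IsPath)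
    (hq : q.IsPath) : p.length = q.length :=
  have := hG.subsingleton_path v w
  congrArg (fun r : G.Path v w => r.1.length) (Subsingleton.elim ⟨p, hp⟩ ⟨q, hq⟩)

theorem IsAcyclic.not_adj_of_adj_of_adj (hG : G.IsAcyclic) (hab : G.Adj a b) (hbc : G.Adj b c) :
    ¬G.Adj a c := fun hac => by
  have := hG.length_eq_of_isPath (p := .cons hac .nil) (q := .cons hab (.cons hbc .nil))
    (by simp [hac.ne]) (by simp [hab.ne, hbc.ne, hac.ne])
  simp at this

theorem IsAcyclic.eq_of_adj_of_adj (hG : G.IsAcyclic) (hab : G.Adj a b) (hbc : G.Adj b c)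
    (had : G.Adj a d) (hdc : G.Adj d c) (hac : a ≠ c) : b = d := by
  have := hG.subsingleton_path a c
  have := Subsingleton.elim (α := G.Path a c)
    ⟨.cons hab (.cons hbc .nil), by simp [hab.ne, hbc.ne, hac]⟩
    ⟨.cons had (.cons hdc .nil), by simp [had.ne, hdc.ne, hac]⟩
  simpa using congrArg (fun r : G.Path a c => r.1.support) this

theorem IsAcyclic.not_adj_of_path5 (hG : G.IsAcyclic) (hab : G.Adj a b) (hbc : G.Adj b c)
    (hcd : G.Adj c d) (hde : G.Adj d e) (hac : a ≠ c) (had : a ≠ d) (hce : c ≠ e) :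
    ¬G.Adj e a := fun hea => by
  have := hG.length_eq_of_isPath (p := .cons hab (.cons hbc .nil))
    (q := .cons hea.symm (.cons hde.symm (.cons hcd.symm .nil)))
    (by simp [hab.ne, hbc.ne, hac]) (by simp [hea.ne', hde.ne', hcd.ne', hac, had, hce.symm])
  simp at this

end Acyclic

section Distance

variable {V : Type*} {G : SimpleGraph V} {u x y : V}

theorem Connected.exists_adj_dist_add_one_eq (hG : G.Connected) (hxy : x ≠ y) :
    ∃ z, G.Adj x z ∧ G.dist z y + 1 = G.dist x y := by
  obtain ⟨p, hp⟩ := hG.exists_walk_length_eq_dist x y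
  cases p with
  | nil => exact absurd rfl hxy
  | @cons _ z _ h q =>
    refine ⟨z, h, le_antisymm (by simpa [← hp] using dist_le q) ?_⟩
    have := hG.dist_triangle (u := x) (v := z) (w := y)
    rw [dist_eq_one_iff_adj.2 h] at this
    omega

theorem Connected.dist_eq_add_one_of_neighborSet_eq (hG : G.Connected)
    (hx : G.neighborSet x = {u}) (hy : y ≠ x) : G.dist x y = G.dist u y + 1 := by
  have hxu : G.Adj x u := by simp [← mem_neighborSet, hx]
  refine le_antisymm ?_ ?_
  · simpa [dist_eq_one_iff_adj.2 hxu, add_comm] using hG.dist_triangle (u := x) (v := u) (w := y)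
  · obtain ⟨p, hp⟩ := hG.exists_walk_length_eq_dist x y
    cases p with
    | nil => exact absurd rfl hy
    | cons h q =>
      obtain rfl : _ = u := by simpa [← mem_neighborSet, hx] using h
      simpa [← hp] using dist_le q

variable [Finite V]

theorem dist_le_ecc (x y : V) : G.dist x y ≤ ecc G x :=
  le_ciSup (Set.finite_range _).bddAbove y

theorem ecc_eq_of_forall_dist_le {k : ℕ} (hle : ∀ y, G.dist x y ≤ k) (hk : G.dist x y = k) :
    ecc G x = k :=
  have : Nonempty V := ⟨x⟩
  le_antisymm (ciSup_le hle) (hk ▸ dist_le_ecc x y)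

theorem Connected.ecc_eq_add_one_of_neighborSet_eq (hG : G.Connected)
    (hx : G.neighborSet x = {u}) (hu : 2 ≤ ecc G u) : ecc G x = ecc G u + 1 := by
  have : Nonempty V := ⟨x⟩
  obtain ⟨y, hy⟩ : ∃ y, G.dist u y = ecc G u := exists_eq_ciSup_of_finite
  have hxu : G.Adj x u := by simp [← mem_neighborSet, hx]
  have hyx : y ≠ x := by
    rintro rfl
    rw [dist_comm, dist_eq_one_iff_adj.2 hxu] at hy
    omega
  refine ecc_eq_of_forall_dist_le (y := y) (fun z => ?_)
    (by rw [hG.dist_eq_add_one_of_neighborSet_eq hx hyx, hy])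
  rcases eq_or_ne z x with rfl | hz
  · simp
  · rw [hG.dist_eq_add_one_of_neighborSet_eq hx hz]
    exact Nat.add_le_add_right (dist_le_ecc u z) 1

end Distance

section Degree

variable {V : Type*} {G : SimpleGraph V}

theorem deg_eq_degree (G : SimpleGraph V) (v : V) [Fintype (G.neighborSet v)] :
    deg G v = G.degree v := by
  rw [deg, Set.ncard_eq_toFinset_card', ← card_neighborSet_eq_degree, Set.toFinset_card]

theorem IsTree.sum_deg [Fintype V] (hT : G.IsTree) :
    ∑ x, (deg G x : ℝ) = 2 * Fintype.card V - 2 := by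
  classical
  simp_rw [deg_eq_degree]
  rw [← Nat.cast_sum, sum_degrees_eq_twice_card_edges, ← hT.card_edgeFinset]
  push_cast
  ring

theorem ree_eq_sum_deg_div_ecc [Fintype V] (G : SimpleGraph V) :
    ree G = ∑ v, (deg G v : ℝ) / ecc G v := by
  classical
  set g : V → ℝ := fun v => 1 / (ecc G v : ℝ)
  -- both sums equal `∑ d, g d.fst` over the darts `d` of `G`
  have hedge : ∀ e ∈ G.edgeFinset,
      Sym2.lift ⟨fun u v => g u + g v, fun _ _ => by ring⟩ e
        = ∑ d ∈ univ.filter (fun d : G.Dart => d.edge = e), g d.fst := by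
    intro e he
    induction e with
    | _ x y =>
      let d : G.Dart := ⟨(x, y), mem_edgeFinset.1 he⟩
      rw [show s(x, y) = d.edge from rfl, d.edge_fiber, sum_pair d.symm_ne.symm]
      rfl
  have hvert : ∀ v, ∑ d ∈ univ.filter (fun d : G.Dart => d.fst = v), g d.fst
      = deg G v * g v := by
    intro v
    rw [sum_congr rfl fun d hd => by rw [(mem_filter.1 hd).2], sum_const, nsmul_eq_mul,
      deg_eq_degree]
    congr 2
    convert dart_fst_fiber_card_eq_degree (G := G) v
  calc ree G = ∑ e ∈ G.edgeFinset, Sym2.lift ⟨fun u v => g u + g v, fun _ _ => by ring⟩ e := by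
        unfold ree; congr
    _ = ∑ d : G.Dart, g d.fst := by
        rw [sum_congr rfl hedge, sum_fiberwise_of_maps_to fun d _ => mem_edgeFinset.2 d.edge_mem]
    _ = ∑ v, (deg G v : ℝ) / ecc G v := by
        rw [← sum_fiberwise_of_maps_to (g := fun d : G.Dart => d.fst) fun d _ => mem_univ _]
        exact sum_congr rfl fun v _ => by rw [hvert, div_eq_mul_one_div]

end Degree

section Matching

variable {V : Type*} {G : SimpleGraph V}

def matchingSizes (G : SimpleGraph V) : Set ℕ :=
  {m | ∃ s : Set (Sym2 V), s ⊆ G.edgeSet ∧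
    (s.Pairwise fun e f => ∀ x, x ∈ e → x ∉ f) ∧ s.ncard = m}

variable [Finite V]

theorem bddAbove_matchingSizes (G : SimpleGraph V) : BddAbove G.matchingSizes :=
  ⟨Nat.card (Sym2 V), by rintro _ ⟨s, -, -, rfl⟩; exact Set.ncard_le_card s⟩

theorem three_le_matchNum {a₁ b₁ a₂ b₂ a₃ b₃ : V} (h₁ : G.Adj a₁ b₁) (h₂ : G.Adj a₂ b₂)
    (h₃ : G.Adj a₃ b₃) (hd : [a₁, b₁, a₂, b₂, a₃, b₃].Nodup) : 3 ≤ matchNum G := by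
  simp only [List.nodup_cons, List.mem_cons, List.not_mem_nil, or_false, not_or,
    List.nodup_nil, and_true] at hd
  refine le_csSup (bddAbove_matchingSizes G)
    ⟨{s(a₁, b₁), s(a₂, b₂), s(a₃, b₃)}, ?_, ?_, Set.ncard_eq_three.2 ⟨_, _, _, ?_, ?_, ?_, rfl⟩⟩
  · simp [Set.insert_subset_iff, h₁, h₂, h₃]
  · intro e he f hf hef
    simp only [Set.mem_insert_iff, Set.mem_singleton_iff] at he hf
    rcases he with rfl | rfl | rfl <;> rcases hf with rfl | rfl | rfl <;>
      simp only [Sym2.mem_iff] <;> grind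
  all_goals simp_all

theorem exists_adj_adj_of_matchNum_eq_two (hm : matchNum G = 2) :
    ∃ a₁ b₁ a₂ b₂, G.Adj a₁ b₁ ∧ G.Adj a₂ b₂ ∧ [a₁, b₁, a₂, b₂].Nodup := by
  obtain ⟨s, hsub, hdisj, hcard⟩ : 2 ∈ G.matchingSizes :=
    hm ▸ Nat.sSup_mem ⟨0, ∅, by simp⟩ (bddAbove_matchingSizes G)
  obtain ⟨e₁, e₂, hne, rfl⟩ := Set.ncard_eq_two.1 hcard
  have hd := hdisj (by simp) (by simp) hne
  induction e₁ with | _ a₁ b₁ => induction e₂ with | _ a₂ b₂ =>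
  have h₁ : G.Adj a₁ b₁ := hsub (Set.mem_insert _ _)
  have h₂ : G.Adj a₂ b₂ := hsub (Set.mem_insert_of_mem _ rfl)
  refine ⟨a₁, b₁, a₂, b₂, h₁, h₂, ?_⟩
  simp only [Sym2.mem_iff] at hd
  simp only [List.nodup_cons, List.mem_cons, List.not_mem_nil, or_false, not_or,
    List.nodup_nil, and_true]
  have := h₁.ne
  have := h₂.ne
  grind

theorem isVertexCover_of_adj_of_adj (hm : matchNum G ≤ 2) {a₁ b₁ a₂ b₂ : V}
    (h₁ : G.Adj a₁ b₁) (h₂ : G.Adj a₂ b₂) (hd : [a₁, b₁, a₂, b₂].Nodup) :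
    G.IsVertexCover {a₁, b₁, a₂, b₂} := by
  intro s t hst
  by_contra! h
  simp only [Set.mem_insert_iff, Set.mem_singleton_iff, not_or] at h
  have := three_le_matchNum h₁ h₂ hst (by simp_all [hst.ne, eq_comm])
  omega

end Matching

section Paths

variable {V : Type*} {G : SimpleGraph V} {a₁ b₁ a₂ b₂ p₀ p₁ p₂ p₃ p₄ t u v x : V}

theorem Connected.exists_path4 (hG : G.Connected) (h₁ : G.Adj a₁ b₁) (h₂ : G.Adj a₂ b₂)
    (hd : [a₁, b₁, a₂, b₂].Nodup) :
    ∃ p₀ p₁ p₂ p₃, G.Adj p₀ p₁ ∧ G.Adj p₁ p₂ ∧ G.Adj p₂ p₃ ∧ [p₀, p₁, p₂, p₃].Nodup := by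
  simp only [List.nodup_cons, List.mem_cons, List.not_mem_nil, or_false, not_or,
    List.nodup_nil, and_true, not_false_eq_true] at hd ⊢
  obtain ⟨m₁, h₁m, hm₁⟩ := hG.exists_adj_dist_add_one_eq hd.1.2.1
  by_cases hm₁a : m₁ = a₂
  · subst hm₁a
    exact ⟨b₁, a₁, m₁, b₂, h₁.symm, h₁m, h₂, by grind⟩
  obtain ⟨m₂, hm₁m, hm₂⟩ := hG.exists_adj_dist_add_one_eq hm₁a
  by_cases hm₂a : m₂ = a₂
  · subst hm₂a
    by_cases hm₁b : m₁ = b₁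
    · subst hm₁b
      exact ⟨a₁, m₁, m₂, b₂, h₁m, hm₁m, h₂, by grind⟩
    · exact ⟨b₁, a₁, m₁, m₂, h₁.symm, h₁m, hm₁m, by grind [Adj.ne]⟩
  -- the vertices `a₁, m₁, m₂, m₃` have distinct distances to `a₂`
  obtain ⟨m₃, hm₂m, hm₃⟩ := hG.exists_adj_dist_add_one_eq hm₂a
  refine ⟨a₁, m₁, m₂, m₃, h₁m, hm₁m, hm₂m, ?_⟩
  refine ⟨⟨?_, ?_, ?_⟩, ⟨?_, ?_⟩, ?_⟩ <;> rintro rfl <;> omega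

theorem IsVertexCover.adj_or_adj (hG : G.Connected) (hc : G.IsVertexCover {u, v})
    (hxu : x ≠ u) (hxv : x ≠ v) : G.Adj u x ∨ G.Adj v x := by
  obtain ⟨z, hxz, -⟩ := hG.exists_adj_dist_add_one_eq hxu
  rcases hc hxz with hx | hz <;> simp only [Set.mem_insert_iff, Set.mem_singleton_iff] at *
  · tauto
  · rcases hz with rfl | rfl
    exacts [.inl hxz.symm, .inr hxz.symm]

theorem IsAcyclic.eq_of_adj_of_path4 (hG : G.IsAcyclic)
    (h5 : ¬∃ q₀ q₁ q₂ q₃ q₄, G.Adj q₀ q₁ ∧ G.Adj q₁ q₂ ∧ G.Adj q₂ q₃ ∧ G.Adj q₃ q₄ ∧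
      [q₀, q₁, q₂, q₃, q₄].Nodup)
    (h₀₁ : G.Adj p₀ p₁) (h₁₂ : G.Adj p₁ p₂) (h₂₃ : G.Adj p₂ p₃) (hd : [p₀, p₁, p₂, p₃].Nodup)
    (ht : G.Adj p₀ t) : t = p₁ := by
  by_contra htp
  simp only [List.nodup_cons, List.mem_cons, List.not_mem_nil, or_false, not_or,
    List.nodup_nil, and_true, not_false_eq_true] at hd
  obtain ⟨⟨n₀₁, n₀₂, n₀₃⟩, ⟨n₁₂, n₁₃⟩, n₂₃⟩ := hd
  have ht₂ : t ≠ p₂ := by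
    rintro rfl
    exact hG.not_adj_of_adj_of_adj h₀₁ h₁₂ ht
  have ht₃ : t ≠ p₃ := by
    rintro rfl
    exact n₀₂ (hG.eq_of_adj_of_adj h₁₂ h₂₃ h₀₁.symm ht n₁₃).symm
  exact h5 ⟨t, p₀, p₁, p₂, p₃, ht.symm, h₀₁, h₁₂, h₂₃, by simp [*, ht.ne', Ne.symm]⟩

variable [Finite V]

theorem IsAcyclic.isVertexCover_of_path4 (hG : G.IsAcyclic) (hm : matchNum G ≤ 2)
    (h5 : ¬∃ q₀ q₁ q₂ q₃ q₄, G.Adj q₀ q₁ ∧ G.Adj q₁ q₂ ∧ G.Adj q₂ q₃ ∧ G.Adj q₃ q₄ ∧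
      [q₀, q₁, q₂, q₃, q₄].Nodup)
    (h₀₁ : G.Adj p₀ p₁) (h₁₂ : G.Adj p₁ p₂) (h₂₃ : G.Adj p₂ p₃) (hd : [p₀, p₁, p₂, p₃].Nodup) :
    G.IsVertexCover {p₁, p₂} := by
  have hd' : [p₃, p₂, p₁, p₀].Nodup := List.nodup_reverse.2 hd
  have key : ∀ s t, G.Adj s t → s ∈ ({p₀, p₁, p₂, p₃} : Set V) →
      s ∈ ({p₁, p₂} : Set V) ∨ t ∈ ({p₁, p₂} : Set V) := by
    intro s t hst hs
    simp only [Set.mem_insert_iff, Set.mem_singleton_iff] at hs ⊢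
    rcases hs with rfl | rfl | rfl | rfl
    · exact .inr (.inl (hG.eq_of_adj_of_path4 h5 h₀₁ h₁₂ h₂₃ hd hst))
    · tauto
    · tauto
    · exact .inr (.inr (hG.eq_of_adj_of_path4 h5 h₂₃.symm h₁₂.symm h₀₁.symm hd' hst))
  intro s t hst
  rcases isVertexCover_of_adj_of_adj hm h₀₁ h₂₃ hd hst with h | h
  · exact key s t hst h
  · exact (key t s hst.symm h).symm

theorem IsAcyclic.eq_or_eq_of_adj_of_path5 (hG : G.IsAcyclic) (hm : matchNum G ≤ 2)
    (h₀₁ : G.Adj p₀ p₁) (h₁₂ : G.Adj p₁ p₂) (h₂₃ : G.Adj p₂ p₃) (h₃₄ : G.Adj p₃ p₄)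
    (hd : [p₀, p₁, p₂, p₃, p₄].Nodup) (ht : G.Adj p₀ t) : t = p₁ ∨ t = p₃ := by
  simp only [List.nodup_cons, List.mem_cons, List.not_mem_nil, or_false, not_or,
    List.nodup_nil, and_true, not_false_eq_true] at hd
  obtain ⟨⟨n₀₁, n₀₂, n₀₃, n₀₄⟩, ⟨n₁₂, n₁₃, n₁₄⟩, ⟨n₂₃, n₂₄⟩, n₃₄⟩ := hd
  have hc := isVertexCover_of_adj_of_adj hm h₁₂ h₃₄ (by simp [*])
  rcases hc ht with h | h <;> simp only [Set.mem_insert_iff, Set.mem_singleton_iff] at h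
  · rcases h with h | h | h | h <;> contradiction
  rcases h with h | rfl | h | rfl
  · exact .inl h
  · exact absurd ht (hG.not_adj_of_adj_of_adj h₀₁ h₁₂)
  · exact .inr h
  · exact absurd ht.symm (hG.not_adj_of_path5 h₀₁ h₁₂ h₂₃ h₃₄ n₀₂ n₀₃ n₂₄)

theorem IsAcyclic.isVertexCover_of_path5 (hG : G.IsAcyclic) (hm : matchNum G ≤ 2)
    (h₀₁ : G.Adj p₀ p₁) (h₁₂ : G.Adj p₁ p₂) (h₂₃ : G.Adj p₂ p₃) (h₃₄ : G.Adj p₃ p₄)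
    (hd : [p₀, p₁, p₂, p₃, p₄].Nodup) : G.IsVertexCover {p₁, p₃} := by
  have hd' : [p₄, p₃, p₂, p₁, p₀].Nodup := List.nodup_reverse.2 hd
  have key : ∀ s t, G.Adj s t → s ∈ ({p₀, p₁, p₃, p₄} : Set V) →
      s ∈ ({p₁, p₃} : Set V) ∨ t ∈ ({p₁, p₃} : Set V) := by
    intro s t hst hs
    simp only [Set.mem_insert_iff, Set.mem_singleton_iff] at hs ⊢
    rcases hs with rfl | rfl | rfl | rfl
    · exact .inr (hG.eq_or_eq_of_adj_of_path5 hm h₀₁ h₁₂ h₂₃ h₃₄ hd hst)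
    · tauto
    · tauto
    · have := hG.eq_or_eq_of_adj_of_path5 hm h₃₄.symm h₂₃.symm h₁₂.symm h₀₁.symm hd' hst
      tauto
  intro s t hst
  rcases isVertexCover_of_adj_of_adj hm h₀₁ h₃₄ (by simp_all) hst with h | h
  · exact key s t hst h
  · exact (key t s hst.symm h).symm

end Paths

section DoubleStar

variable {V : Type*} {G : SimpleGraph V} {p₀ p₄ u v w x : V}

structure IsDoubleStar (G : SimpleGraph V) (u v : V) : Prop where
  adj : G.Adj u v
  isVertexCover : G.IsVertexCover {u, v}
  adj_iff_not_adj : ∀ x, x ≠ u → x ≠ v → (G.Adj u x ↔ ¬G.Adj v x)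
  exists_adj_left : ∃ x, G.Adj u x ∧ x ≠ v
  exists_adj_right : ∃ x, G.Adj v x ∧ x ≠ u

namespace IsDoubleStar

theorem of_isVertexCover (hT : G.IsTree) (h₀₁ : G.Adj p₀ u) (huv : G.Adj u v)
    (h₂₃ : G.Adj v p₄) (hd : [p₀, u, v, p₄].Nodup) (hc : G.IsVertexCover {u, v}) :
    G.IsDoubleStar u v where
  adj := huv
  isVertexCover := hc
  adj_iff_not_adj x hxu hxv :=
    ⟨fun hux hvx => hT.isAcyclic.not_adj_of_adj_of_adj huv hvx hux,
      fun hvx => (hc.adj_or_adj hT.connected hxu hxv).resolve_right hvx⟩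
  exists_adj_left := ⟨p₀, h₀₁.symm, by simp_all⟩
  exists_adj_right := ⟨p₄, h₂₃, by simp_all [eq_comm]⟩

theorem symm (h : IsDoubleStar G u v) : IsDoubleStar G v u where
  adj := h.adj.symm
  isVertexCover := Set.pair_comm u v ▸ h.isVertexCover
  adj_iff_not_adj x hxv hxu := by rw [h.adj_iff_not_adj x hxu hxv, not_not]
  exists_adj_left := h.exists_adj_right
  exists_adj_right := h.exists_adj_left

theorem adj_or_adj (h : IsDoubleStar G u v) (hxu : x ≠ u) (hxv : x ≠ v) :
    G.Adj u x ∨ G.Adj v x := by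
  rw [h.adj_iff_not_adj x hxu hxv]
  exact em' _

theorem neighborSet_eq (h : IsDoubleStar G u v) (hxu : x ≠ u) (hxv : x ≠ v) (hux : G.Adj u x) :
    G.neighborSet x = {u} := by
  ext t
  simp only [mem_neighborSet, Set.mem_singleton_iff]
  refine ⟨fun hxt => ?_, fun htu => htu ▸ hux.symm⟩
  rcases h.isVertexCover hxt with hx | ht <;> simp only [Set.mem_insert_iff,
    Set.mem_singleton_iff] at *
  · tauto
  · rcases ht with rfl | rfl
    · rfl
    · exact absurd hxt.symm ((h.adj_iff_not_adj x hxu hxv).1 hux)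

theorem connected (h : IsDoubleStar G u v) : G.Connected := by
  refine (connected_iff_exists_forall_reachable G).2 ⟨u, fun x => ?_⟩
  by_cases hxu : x = u
  · exact hxu ▸ Reachable.rfl
  by_cases hxv : x = v
  · exact hxv ▸ h.adj.reachable
  rcases h.adj_or_adj hxu hxv with hux | hvx
  · exact hux.reachable
  · exact h.adj.reachable.trans hvx.reachable

theorem dist_le_two (h : IsDoubleStar G u v) (y : V) : G.dist u y ≤ 2 := by
  by_cases hyu : y = u
  · simp [hyu]
  by_cases hyv : y = v
  · simp [hyv, dist_eq_one_iff_adj.2 h.adj]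
  rcases h.adj_or_adj hyu hyv with huy | hvy
  · simp [dist_eq_one_iff_adj.2 huy]
  · have := h.connected.dist_triangle (u := u) (v := v) (w := y)
    rw [dist_eq_one_iff_adj.2 h.adj, dist_eq_one_iff_adj.2 hvy] at this
    exact this

theorem deg_of_ne (h : IsDoubleStar G u v) (hxu : x ≠ u) (hxv : x ≠ v) : deg G x = 1 := by
  rcases h.adj_or_adj hxu hxv with hux | hvx
  · rw [deg, h.neighborSet_eq hxu hxv hux, Set.ncard_singleton]
  · rw [deg, h.symm.neighborSet_eq hxv hxu hvx, Set.ncard_singleton]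

variable [Finite V]

theorem ecc_left (h : IsDoubleStar G u v) : ecc G u = 2 := by
  obtain ⟨y, hvy, hyu⟩ := h.exists_adj_right
  refine ecc_eq_of_forall_dist_le h.dist_le_two (y := y) ?_
  rw [dist_comm, h.connected.dist_eq_add_one_of_neighborSet_eq
    (h.symm.neighborSet_eq hvy.ne' hyu hvy) (Ne.symm hyu), dist_comm,
    dist_eq_one_iff_adj.2 h.adj]

theorem ecc_of_ne (h : IsDoubleStar G u v) (hxu : x ≠ u) (hxv : x ≠ v) : ecc G x = 3 := by
  rcases h.adj_or_adj hxu hxv with hux | hvx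
  · rw [h.connected.ecc_eq_add_one_of_neighborSet_eq (h.neighborSet_eq hxu hxv hux)
      h.ecc_left.ge, h.ecc_left]
  · rw [h.connected.ecc_eq_add_one_of_neighborSet_eq (h.symm.neighborSet_eq hxv hxu hvx)
      h.symm.ecc_left.ge, h.symm.ecc_left]

theorem ree_eq [Fintype V] (h : IsDoubleStar G u v) (hT : G.IsTree) :
    ree G = (5 * Fintype.card V - 4) / 6 := by
  classical
  have hleaf : ∀ x ∉ ({u, v} : Finset V), deg G x = 1 ∧ ecc G x = 3 := fun x hx => by
    simp only [mem_insert, mem_singleton, not_or] at hx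
    exact ⟨h.deg_of_ne hx.1 hx.2, h.ecc_of_ne hx.1 hx.2⟩
  have hsum := hT.sum_deg
  rw [sum_univ_eq_sum_add_card_compl_mul {u, v} (c := 1) fun x hx => by
    simp [(hleaf x hx).1]] at hsum
  rw [ree_eq_sum_deg_div_ecc, sum_univ_eq_sum_add_card_compl_mul {u, v} (c := 1 / 3)
    fun x hx => by simp [hleaf x hx]]
  rw [sum_pair h.adj.ne] at hsum ⊢
  rw [h.ecc_left, h.symm.ecc_left, card_pair h.adj.ne] at *
  push_cast at *
  linarith

end IsDoubleStar

structure IsSubdividedDoubleStar (G : SimpleGraph V) (u w v : V) : Prop where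
  adj_left : G.Adj u w
  adj_right : G.Adj w v
  not_adj : ¬G.Adj u v
  isVertexCover : G.IsVertexCover {u, v}
  adj_iff_not_adj : ∀ x, x ≠ u → x ≠ v → x ≠ w → (G.Adj u x ↔ ¬G.Adj v x)
  exists_adj_left : ∃ x, G.Adj u x ∧ x ≠ w
  exists_adj_right : ∃ x, G.Adj v x ∧ x ≠ w

namespace IsSubdividedDoubleStar

theorem of_isVertexCover (hT : G.IsTree) (h₀₁ : G.Adj p₀ u)
    (h₁₂ : G.Adj u w) (h₂₃ : G.Adj w v) (h₃₄ : G.Adj v p₄) (hd : [p₀, u, w, v, p₄].Nodup)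
    (hc : G.IsVertexCover {u, v}) : G.IsSubdividedDoubleStar u w v where
  adj_left := h₁₂
  adj_right := h₂₃
  not_adj := hT.isAcyclic.not_adj_of_adj_of_adj h₁₂ h₂₃
  isVertexCover := hc
  adj_iff_not_adj x hxu hxv hxw :=
    ⟨fun hux hvx => hxw (hT.isAcyclic.eq_of_adj_of_adj hux hvx.symm h₁₂ h₂₃ (by simp_all)),
      fun hvx => (hc.adj_or_adj hT.connected hxu hxv).resolve_right hvx⟩
  exists_adj_left := ⟨p₀, h₀₁.symm, by simp_all⟩
  exists_adj_right := ⟨p₄, h₃₄, by simp_all [eq_comm]⟩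

theorem symm (h : IsSubdividedDoubleStar G u w v) : IsSubdividedDoubleStar G v w u where
  adj_left := h.adj_right.symm
  adj_right := h.adj_left.symm
  not_adj := fun hvu => h.not_adj hvu.symm
  isVertexCover := Set.pair_comm u v ▸ h.isVertexCover
  adj_iff_not_adj x hxv hxu hxw := by rw [h.adj_iff_not_adj x hxu hxv hxw, not_not]
  exists_adj_left := h.exists_adj_right
  exists_adj_right := h.exists_adj_left

theorem ne (h : IsSubdividedDoubleStar G u w v) : u ≠ v := by
  rintro rfl
  obtain ⟨x, hux, hxw⟩ := h.exists_adj_left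
  exact (h.adj_iff_not_adj x hux.ne' hux.ne' hxw).1 hux hux

theorem adj_or_adj (h : IsSubdividedDoubleStar G u w v) (hxu : x ≠ u) (hxv : x ≠ v)
    (hxw : x ≠ w) : G.Adj u x ∨ G.Adj v x := by
  rw [h.adj_iff_not_adj x hxu hxv hxw]
  exact em' _

theorem neighborSet_eq (h : IsSubdividedDoubleStar G u w v) (hxu : x ≠ u) (hxv : x ≠ v)
    (hxw : x ≠ w) (hux : G.Adj u x) : G.neighborSet x = {u} := by
  ext t
  simp only [mem_neighborSet, Set.mem_singleton_iff]
  refine ⟨fun hxt => ?_, fun htu => htu ▸ hux.symm⟩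
  rcases h.isVertexCover hxt with hx | ht <;> simp only [Set.mem_insert_iff,
    Set.mem_singleton_iff] at *
  · tauto
  · rcases ht with rfl | rfl
    · rfl
    · exact absurd hxt.symm ((h.adj_iff_not_adj x hxu hxv hxw).1 hux)

theorem neighborSet_middle (h : IsSubdividedDoubleStar G u w v) : G.neighborSet w = {u, v} := by
  ext t
  simp only [mem_neighborSet, Set.mem_insert_iff, Set.mem_singleton_iff]
  refine ⟨fun hwt => ?_, by rintro (rfl | rfl); exacts [h.adj_left.symm, h.adj_right]⟩
  rcases h.isVertexCover hwt with hw | ht <;> simp only [Set.mem_insert_iff,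
    Set.mem_singleton_iff] at *
  · rcases hw with rfl | rfl
    exacts [absurd h.adj_left (G.irrefl), absurd h.adj_right (G.irrefl)]
  · exact ht

theorem connected (h : IsSubdividedDoubleStar G u w v) : G.Connected := by
  refine (connected_iff_exists_forall_reachable G).2 ⟨u, fun x => ?_⟩
  have huv : G.Reachable u v := h.adj_left.reachable.trans h.adj_right.reachable
  by_cases hxu : x = u
  · exact hxu ▸ Reachable.rfl
  by_cases hxv : x = v
  · exact hxv ▸ huv
  by_cases hxw : x = w
  · exact hxw ▸ h.adj_left.reachable
  rcases h.adj_or_adj hxu hxv hxw with hux | hvx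
  · exact hux.reachable
  · exact huv.trans hvx.reachable

theorem dist_middle_le (h : IsSubdividedDoubleStar G u w v) (y : V) : G.dist w y ≤ 2 := by
  by_cases hyw : y = w
  · simp [hyw]
  by_cases hyu : y = u
  · simp [hyu, dist_eq_one_iff_adj.2 h.adj_left.symm]
  by_cases hyv : y = v
  · simp [hyv, dist_eq_one_iff_adj.2 h.adj_right]
  rcases h.adj_or_adj hyu hyv hyw with huy | hvy
  · simpa [dist_eq_one_iff_adj.2 h.adj_left.symm, dist_eq_one_iff_adj.2 huy] using
      h.connected.dist_triangle (u := w) (v := u) (w := y)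
  · simpa [dist_eq_one_iff_adj.2 h.adj_right, dist_eq_one_iff_adj.2 hvy] using
      h.connected.dist_triangle (u := w) (v := v) (w := y)

theorem dist_left_le (h : IsSubdividedDoubleStar G u w v) (y : V) : G.dist u y ≤ 3 := by
  have := h.connected.dist_triangle (u := u) (v := w) (w := y)
  rw [dist_eq_one_iff_adj.2 h.adj_left] at this
  linarith [h.dist_middle_le y]

theorem dist_left_right (h : IsSubdividedDoubleStar G u w v) : G.dist u v = 2 := by
  have h0 := h.connected.pos_dist_of_ne h.ne
  have h1 : G.dist u v ≠ 1 := fun h1 => h.not_adj (dist_eq_one_iff_adj.1 h1)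
  have := h.connected.dist_triangle (u := u) (v := w) (w := v)
  rw [dist_eq_one_iff_adj.2 h.adj_left, dist_eq_one_iff_adj.2 h.adj_right] at this
  omega

theorem deg_middle (h : IsSubdividedDoubleStar G u w v) : deg G w = 2 := by
  rw [deg, h.neighborSet_middle, Set.ncard_pair h.ne]

theorem deg_of_ne (h : IsSubdividedDoubleStar G u w v) (hxu : x ≠ u) (hxv : x ≠ v)
    (hxw : x ≠ w) : deg G x = 1 := by
  rcases h.adj_or_adj hxu hxv hxw with hux | hvx
  · rw [deg, h.neighborSet_eq hxu hxv hxw hux, Set.ncard_singleton]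
  · rw [deg, h.symm.neighborSet_eq hxv hxu hxw hvx, Set.ncard_singleton]

variable [Finite V]

theorem ecc_middle (h : IsSubdividedDoubleStar G u w v) : ecc G w = 2 := by
  obtain ⟨x, hux, hxw⟩ := h.exists_adj_left
  have hxv : x ≠ v := fun hxv => h.not_adj (hxv ▸ hux)
  refine ecc_eq_of_forall_dist_le h.dist_middle_le (y := x) ?_
  rw [dist_comm, h.connected.dist_eq_add_one_of_neighborSet_eq
    (h.neighborSet_eq hux.ne' hxv hxw hux) (Ne.symm hxw), dist_eq_one_iff_adj.2 h.adj_left]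

theorem ecc_left (h : IsSubdividedDoubleStar G u w v) : ecc G u = 3 := by
  obtain ⟨y, hvy, hyw⟩ := h.exists_adj_right
  have hyu : y ≠ u := fun hyu => h.not_adj (hyu ▸ hvy).symm
  refine ecc_eq_of_forall_dist_le h.dist_left_le (y := y) ?_
  rw [dist_comm, h.connected.dist_eq_add_one_of_neighborSet_eq
    (h.symm.neighborSet_eq hvy.ne' hyu hyw hvy) (Ne.symm hyu), dist_comm, h.dist_left_right]

theorem ecc_of_ne (h : IsSubdividedDoubleStar G u w v) (hxu : x ≠ u) (hxv : x ≠ v)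
    (hxw : x ≠ w) : ecc G x = 4 := by
  rcases h.adj_or_adj hxu hxv hxw with hux | hvx
  · rw [h.connected.ecc_eq_add_one_of_neighborSet_eq (h.neighborSet_eq hxu hxv hxw hux)
      (by rw [h.ecc_left]; norm_num), h.ecc_left]
  · rw [h.connected.ecc_eq_add_one_of_neighborSet_eq (h.symm.neighborSet_eq hxv hxu hxw hvx)
      (by rw [h.symm.ecc_left]; norm_num), h.symm.ecc_left]

theorem ree_eq [Fintype V] (h : IsSubdividedDoubleStar G u w v) (hT : G.IsTree) :
    ree G = (7 * Fintype.card V - 1) / 12 := by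
  classical
  have hleaf : ∀ x ∉ ({u, v, w} : Finset V), deg G x = 1 ∧ ecc G x = 4 := fun x hx => by
    simp only [mem_insert, mem_singleton, not_or] at hx
    exact ⟨h.deg_of_ne hx.1 hx.2.1 hx.2.2, h.ecc_of_ne hx.1 hx.2.1 hx.2.2⟩
  have hu : u ∉ ({v, w} : Finset V) := by simp [h.ne, h.adj_left.ne]
  have hsum := hT.sum_deg
  rw [sum_univ_eq_sum_add_card_compl_mul {u, v, w} (c := 1) fun x hx => by
    simp [(hleaf x hx).1]] at hsum
  rw [ree_eq_sum_deg_div_ecc, sum_univ_eq_sum_add_card_compl_mul {u, v, w} (c := 1 / 4)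
    fun x hx => by simp [hleaf x hx]]
  rw [sum_insert hu, sum_pair h.adj_right.ne'] at hsum ⊢
  rw [h.ecc_left, h.symm.ecc_left, h.ecc_middle, h.deg_middle, card_insert_of_notMem hu,
    card_pair h.adj_right.ne'] at *
  push_cast at *
  linarith

theorem ree_lt [Fintype V] (h : IsSubdividedDoubleStar G u w v) (hT : G.IsTree) :
    ree G < (5 * Fintype.card V - 4) / 6 := by
  classical
  have hcard := card_le_univ ({u, v, w} : Finset V)
  rw [card_insert_of_notMem (by simp [h.ne, h.adj_left.ne]), card_pair h.adj_right.ne'] at hcard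
  rw [h.ree_eq hT]
  have : (3 : ℝ) ≤ Fintype.card V := by exact_mod_cast hcard
  linarith

end IsSubdividedDoubleStar

theorem IsTree.isDoubleStar_or_isSubdividedDoubleStar [Finite V] (hT : G.IsTree)
    (hm : matchNum G = 2) :
    (∃ u v, G.IsDoubleStar u v) ∨ ∃ u w v, G.IsSubdividedDoubleStar u w v := by
  by_cases h5 : ∃ p₀ p₁ p₂ p₃ p₄, G.Adj p₀ p₁ ∧ G.Adj p₁ p₂ ∧ G.Adj p₂ p₃ ∧ G.Adj p₃ p₄ ∧
      [p₀, p₁, p₂, p₃, p₄].Nodup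
  · obtain ⟨p₀, p₁, p₂, p₃, p₄, h₀₁, h₁₂, h₂₃, h₃₄, hd⟩ := h5
    exact .inr ⟨p₁, p₂, p₃, .of_isVertexCover hT h₀₁ h₁₂ h₂₃ h₃₄ hd
      (hT.isAcyclic.isVertexCover_of_path5 hm.le h₀₁ h₁₂ h₂₃ h₃₄ hd)⟩
  · obtain ⟨a₁, b₁, a₂, b₂, h₁, h₂, hd⟩ := exists_adj_adj_of_matchNum_eq_two hm
    obtain ⟨p₀, p₁, p₂, p₃, h₀₁, h₁₂, h₂₃, hd⟩ := hT.connected.exists_path4 h₁ h₂ hd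
    exact .inl ⟨p₁, p₂, .of_isVertexCover hT h₀₁ h₁₂ h₂₃ hd
      (hT.isAcyclic.isVertexCover_of_path4 hm.le h5 h₀₁ h₁₂ h₂₃ hd)⟩

end DoubleStar

section Isomorphism

variable {V W : Type*} {G : SimpleGraph V} {H : SimpleGraph W} {u v x : V}

theorem nonempty_iso_of_eq_comap {C : Type*} (K : SimpleGraph C) {f : V → C} {g : W → C}
    (hG : G = K.comap f) (hH : H = K.comap g)
    (hfib : ∀ c, Nonempty ({x // f x = c} ≃ {y // g y = c})) : Nonempty (G ≃g H) := by
  subst hG hH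
  let e := Equiv.ofFiberEquiv fun c => (hfib c).some
  have he : ∀ x, g (e x) = f x := Equiv.ofFiberEquiv_map _
  exact ⟨⟨e, by simp only [comap_adj, he, implies_true]⟩⟩

theorem doubleStar_adj {a b : ℕ} {x y : Fin (a + b + 2)} :
    (doubleStar a b).Adj x y ↔ x.val ≠ y.val ∧
      ((x.val = 0 ∧ y.val = 1) ∨ (x.val = 0 ∧ 2 ≤ y.val ∧ y.val < a + 2) ∨
        (x.val = 1 ∧ a + 2 ≤ y.val) ∨ (y.val = 0 ∧ x.val = 1) ∨
        (y.val = 0 ∧ 2 ≤ x.val ∧ x.val < a + 2) ∨ (y.val = 1 ∧ a + 2 ≤ x.val)) := by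
  rw [doubleStar, fromRel_adj, Ne, Fin.ext_iff]
  tauto

theorem isDoubleStar_doubleStar {a b : ℕ} (ha : 1 ≤ a) (hb : 1 ≤ b) :
    (doubleStar a b).IsDoubleStar ⟨0, by omega⟩ ⟨1, by omega⟩ where
  adj := by simp [doubleStar_adj]
  isVertexCover x y hxy := by
    simp only [doubleStar_adj] at hxy
    simp only [Set.mem_insert_iff, Set.mem_singleton_iff, Fin.ext_iff]
    omega
  adj_iff_not_adj x hx0 hx1 := by
    simp only [ne_eq, Fin.ext_iff] at hx0 hx1
    have := x.isLt
    simp only [doubleStar_adj, true_and]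
    omega
  exists_adj_left := ⟨⟨2, by omega⟩, by simp [doubleStar_adj]; omega, by simp [Fin.ext_iff]⟩
  exists_adj_right := ⟨⟨a + 2, by omega⟩, by simp [doubleStar_adj], by simp [Fin.ext_iff]⟩

open Classical in
/-- Collapses a double star with centres `u`, `v` onto the path `doubleStar 1 1` on `Fin 4`. -/
noncomputable def doubleStarPart (G : SimpleGraph V) (u v x : V) : Fin 4 :=
  if x = u then 0 else if x = v then 1 else if G.Adj u x then 2 else 3

theorem doubleStarPart_eq_zero_iff : doubleStarPart G u v x = 0 ↔ x = u := by
  by_cases hxu : x = u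
  · simp [doubleStarPart, hxu]
  simp only [doubleStarPart, hxu, if_false]
  split_ifs <;> simp

theorem card_doubleStarPart_eq_zero [Fintype V] :
    Fintype.card {x // doubleStarPart G u v x = 0} = 1 := by
  rw [Fintype.card_congr (Equiv.subtypeEquivRight fun x => doubleStarPart_eq_zero_iff),
    Fintype.card_subtype_eq u]

namespace IsDoubleStar

theorem of_iso (e : G ≃g H) (h : H.IsDoubleStar (e u) (e v)) : G.IsDoubleStar u v where
  adj := e.map_adj_iff.1 h.adj
  isVertexCover x y hxy := by
    simpa [e.injective.eq_iff] using h.isVertexCover (e.map_adj_iff.2 hxy)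
  adj_iff_not_adj x hxu hxv := by
    simpa [e.map_adj_iff] using
      h.adj_iff_not_adj (e x) (e.injective.ne hxu) (e.injective.ne hxv)
  exists_adj_left := by
    obtain ⟨x, hx, hxv⟩ := h.exists_adj_left
    exact ⟨e.symm x, e.map_adj_iff.1 (by simpa using hx), by simpa [e.symm_apply_eq] using hxv⟩
  exists_adj_right := by
    obtain ⟨x, hx, hxu⟩ := h.exists_adj_right
    exact ⟨e.symm x, e.map_adj_iff.1 (by simpa using hx), by simpa [e.symm_apply_eq] using hxu⟩

theorem eq_comap (h : G.IsDoubleStar u v) :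
    G = (doubleStar 1 1).comap (doubleStarPart G u v) := by
  have hcases : ∀ z, (z = u ∧ doubleStarPart G u v z = 0) ∨
      (z = v ∧ doubleStarPart G u v z = 1) ∨
      (z ≠ u ∧ z ≠ v ∧ (∀ t, G.Adj z t ↔ t = u) ∧ (∀ t, G.Adj t z ↔ t = u) ∧
        doubleStarPart G u v z = 2) ∨
      (z ≠ u ∧ z ≠ v ∧ (∀ t, G.Adj z t ↔ t = v) ∧ (∀ t, G.Adj t z ↔ t = v) ∧
        doubleStarPart G u v z = 3) := by
    intro z
    by_cases hzu : z = u
    · simp [doubleStarPart, hzu]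
    by_cases hzv : z = v
    · simp [doubleStarPart, hzv, h.adj.ne']
    have hN : ∀ c, G.neighborSet z = {c} → (∀ t, G.Adj z t ↔ t = c) ∧ (∀ t, G.Adj t z ↔ t = c) :=
      fun c hc => ⟨fun t => by rw [← mem_neighborSet, hc]; rfl,
        fun t => by rw [G.adj_comm, ← mem_neighborSet, hc]; rfl⟩
    rcases h.adj_or_adj hzu hzv with huz | hvz
    · have := hN u (h.neighborSet_eq hzu hzv huz)
      exact .inr (.inr (.inl ⟨hzu, hzv, this.1, this.2, by simp [doubleStarPart, hzu, hzv, huz]⟩))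
    · have hnuz := (h.adj_iff_not_adj z hzu hzv).not.2 (not_not.2 hvz)
      have := hN v (h.symm.neighborSet_eq hzv hzu hvz)
      exact .inr (.inr (.inr ⟨hzu, hzv, this.1, this.2, by simp [doubleStarPart, hzu, hzv, hnuz]⟩))
  ext x y
  rw [comap_adj]
  rcases hcases x with ⟨rfl, hx⟩ | ⟨rfl, hx⟩ | ⟨hxu, hxv, hx₁, hx₂, hx⟩ |
    ⟨hxu, hxv, hx₁, hx₂, hx⟩ <;>
  rcases hcases y with ⟨rfl, hy⟩ | ⟨rfl, hy⟩ | ⟨hyu, hyv, hy₁, hy₂, hy⟩ |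
    ⟨hyu, hyv, hy₁, hy₂, hy⟩ <;>
  simp [doubleStar_adj, h.adj, h.adj.symm, h.adj.ne, h.adj.ne', *]

theorem doubleStarPart_eq_one_iff (h : G.IsDoubleStar u v) :
    doubleStarPart G u v x = 1 ↔ x = v := by
  by_cases hxu : x = u
  · simp [doubleStarPart, hxu, h.adj.ne]
  by_cases hxv : x = v
  · simp [doubleStarPart, hxv, h.adj.ne']
  simp only [doubleStarPart, hxu, hxv, if_false]
  split_ifs <;> simp

variable [Fintype V]

theorem card_doubleStarPart_eq_one (h : G.IsDoubleStar u v) :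
    Fintype.card {x // doubleStarPart G u v x = 1} = 1 := by
  rw [Fintype.card_congr (Equiv.subtypeEquivRight fun x => h.doubleStarPart_eq_one_iff),
    Fintype.card_subtype_eq v]

theorem card_eq (h : G.IsDoubleStar u v) :
    Fintype.card V = Fintype.card {x // doubleStarPart G u v x = 2} +
      Fintype.card {x // doubleStarPart G u v x = 3} + 2 := by
  rw [← Fintype.card_congr (Equiv.sigmaFiberEquiv (doubleStarPart G u v)), Fintype.card_sigma,
    Fin.sum_univ_four, card_doubleStarPart_eq_zero, h.card_doubleStarPart_eq_one]
  ring

theorem nonempty_iso [Fintype W] {u' v' : W} (hG : G.IsDoubleStar u v)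
    (hH : H.IsDoubleStar u' v') (hcard : Fintype.card V = Fintype.card W)
    (hleaf : Fintype.card {x // doubleStarPart G u v x = 2} =
      Fintype.card {y // doubleStarPart H u' v' y = 2}) : Nonempty (G ≃g H) := by
  refine nonempty_iso_of_eq_comap _ hG.eq_comap hH.eq_comap fun c => Fintype.card_eq.1 ?_
  have := hG.card_eq
  have := hH.card_eq
  fin_cases c
  · exact card_doubleStarPart_eq_zero.trans card_doubleStarPart_eq_zero.symm
  · exact hG.card_doubleStarPart_eq_one.trans hH.card_doubleStarPart_eq_one.symm
  · exact hleaf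
  · simp only [Fin.reduceFinMk, Fin.isValue]
    omega

end IsDoubleStar

theorem card_doubleStarPart_doubleStar {a b : ℕ} (hb : 1 ≤ b) :
    Fintype.card {i // doubleStarPart (doubleStar a b) ⟨0, by omega⟩ ⟨1, by omega⟩ i = 2} = a := by
  have hiff : ∀ i : Fin (a + b + 2),
      doubleStarPart (doubleStar a b) ⟨0, by omega⟩ ⟨1, by omega⟩ i = 2 ↔
      i ∈ Finset.Ico (⟨2, by omega⟩ : Fin (a + b + 2)) ⟨a + 2, by omega⟩ := by
    intro i
    simp only [doubleStarPart, Finset.mem_Ico, Fin.le_def, Fin.lt_def, Fin.ext_iff]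
    split_ifs <;> simp_all [doubleStar_adj]
    omega
  rw [Fintype.card_congr (Equiv.subtypeEquivRight hiff), Fintype.card_coe, Fin.card_Ico]
  simp

theorem IsDoubleStar.exists_iso_doubleStar [Fintype V] (h : G.IsDoubleStar u v) :
    ∃ a b, 1 ≤ a ∧ 1 ≤ b ∧ a + b = Fintype.card V - 2 ∧ Nonempty (G ≃g doubleStar a b) := by
  obtain ⟨x, hux, hxv⟩ := h.exists_adj_left
  obtain ⟨y, hvy, hyu⟩ := h.exists_adj_right
  have hnuy := (h.adj_iff_not_adj y hyu hvy.ne').not.2 (not_not.2 hvy)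
  have ha : 1 ≤ Fintype.card {x // doubleStarPart G u v x = 2} :=
    Fintype.card_pos_iff.2 ⟨⟨x, by simp [doubleStarPart, hux.ne', hxv, hux]⟩⟩
  have hb : 1 ≤ Fintype.card {x // doubleStarPart G u v x = 3} :=
    Fintype.card_pos_iff.2 ⟨⟨y, by simp [doubleStarPart, hyu, hvy.ne', hnuy]⟩⟩
  have hcard := h.card_eq
  refine ⟨_, _, ha, hb, by omega, h.nonempty_iso (isDoubleStar_doubleStar ha hb) ?_ ?_⟩
  · simp [hcard]
  · exact (card_doubleStarPart_doubleStar hb).symm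

end Isomorphism

end SimpleGraph

/-- for a tree T on n vertices with matching number 2,
ξ^{ee}(T) ≤ (5n-4)/6 with equality iff T is a double star P_2(a,b). -/
theorem stmt9 (n : ℕ) (T : SimpleGraph (Fin n)) (hT : T.IsTree)
    (hm : matchNum T = 2) :
    ree T ≤ (5 * (n : ℝ) - 4) / 6 ∧
    (ree T = (5 * (n : ℝ) - 4) / 6 ↔ ∃ a b : ℕ, 1 ≤ a ∧ 1 ≤ b ∧ a + b = n - 2 ∧
      Nonempty (T ≃g doubleStar a b)) := by
  have hiso : (∃ a b : ℕ, 1 ≤ a ∧ 1 ≤ b ∧ a + b = n - 2 ∧ Nonempty (T ≃g doubleStar a b)) →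
      ree T = (5 * (n : ℝ) - 4) / 6 := by
    rintro ⟨a, b, ha, hb, -, ⟨e⟩⟩
    have h := IsDoubleStar.of_iso e (u := e.symm ⟨0, by omega⟩) (v := e.symm ⟨1, by omega⟩)
      (by simpa using isDoubleStar_doubleStar ha hb)
    simpa using h.ree_eq hT
  rcases hT.isDoubleStar_or_isSubdividedDoubleStar hm with ⟨u, v, h⟩ | ⟨u, w, v, h⟩
  · have hree : ree T = (5 * (n : ℝ) - 4) / 6 := by simpa using h.ree_eq hT
    exact ⟨hree.le, fun _ => by simpa using h.exists_iso_doubleStar, hiso⟩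
  · have hlt : ree T < (5 * (n : ℝ) - 4) / 6 := by simpa using h.ree_lt hT
    exact ⟨hlt.le, fun heq => absurd heq hlt.ne, hiso⟩
end
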